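/- Let D be an ω-admissible, homogeneous concrete domain with constants. Then consistency of pairs (T, A) of an ALCOSCC(D) TBox T and a finite set A of feature assertions is computably reducible to consistency of ALCOSCC(D) TBoxes without feature assertions: there is a computable map sending each pair (T, A) to an ALCOSCC(D) TBox T' such that (T, A) has a finitely branching model iff T' does. (The paper's reduction runs in exponential time and the resulting ontology is of polynomial size.) -/

import Mathlib

namespace ALCOSCC

/-! ## Concrete domains and constraint systems -/

/-- A concrete domain: a relational structure over a relational signature. -/
structure ConcreteDomain where
  Dom : Type
  dom_nonempty : Nonempty Dom
  Pred : Type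
  arity : Pred → ℕ
  interp : (P : Pred) → (Fin (arity P) → Dom) → Prop

/-- A single constraint `P(v₁,…,v_k)` over variable type `V`. -/
structure Cstr (D : ConcreteDomain) (V : Type) where
  P : D.Pred
  args : Fin (D.arity P) → V

/-- A constraint system: a set of constraints. -/
abbrev CSys (D : ConcreteDomain) (V : Type) := Set (Cstr D V)

variable {D : ConcreteDomain} {V : Type}

def cstrHolds (h : V → D.Dom) (c : Cstr D V) : Prop := D.interp c.P (h ∘ c.args)

/-- Satisfiability of a constraint system. -/
def csysSat (S : CSys D V) : Prop := ∃ h : V → D.Dom, ∀ c ∈ S, cstrHolds h c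

/-- The variables occurring in a constraint system. -/
def csysVars (S : CSys D V) : Set V := { x | ∃ c ∈ S, ∃ i, c.args i = x }

/-- JEPD: for every arity `k` for which `D` has `k`-ary predicates, the interpretations
of the `k`-ary predicates partition `D^k` (i.e. every tuple satisfies exactly one of them). -/
def JEPD (D : ConcreteDomain) : Prop :=
  ∀ k : ℕ, (∃ P : D.Pred, D.arity P = k) →
    ∀ t : Fin k → D.Dom,
      ∃! P : D.Pred, ∃ h : D.arity P = k, D.interp P (fun i => t (Fin.cast h i))

/-- Quantifier-free, equality-free first-order formulas over the signature of `D`,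
with variables of type `V`. -/
inductive QFF (D : ConcreteDomain) (V : Type) : Type where
  | atom (P : D.Pred) (args : Fin (D.arity P) → V)
  | not (φ : QFF D V)
  | and (φ ψ : QFF D V)
  | or (φ ψ : QFF D V)

def QFF.Eval : QFF D V → (V → D.Dom) → Prop
  | .atom P args, h => D.interp P (h ∘ args)
  | .not φ, h => ¬ φ.Eval h
  | .and φ ψ, h => φ.Eval h ∧ ψ.Eval h
  | .or φ ψ, h => φ.Eval h ∨ ψ.Eval h

/-- JD: equality on `D` is definable by a quantifier-free, equality-free first-order
formula over the signature of `D` (with two variables, `false` ↦ first, `true` ↦ second). -/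
def JD (D : ConcreteDomain) : Prop :=
  ∃ φ : QFF D Bool, ∀ a b : D.Dom, φ.Eval (fun v => bif v then b else a) ↔ a = b

/-- AP (amalgamation): if two constraint systems contain exactly the same constraints
over the variables they share, their union is satisfiable iff both are. -/
def AP (D : ConcreteDomain) : Prop :=
  ∀ (V : Type) (B C : CSys D V),
    (∀ c : Cstr D V, (∀ i, c.args i ∈ csysVars B ∩ csysVars C) → (c ∈ B ↔ c ∈ C)) →
    (csysSat (B ∪ C) ↔ (csysSat B ∧ csysSat C))

/-- A patchwork concrete domain. -/
def Patchwork (D : ConcreteDomain) : Prop := JEPD D ∧ JD D ∧ AP D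

/-- Homomorphism ω-compactness: a countable constraint system is satisfiable whenever
all of its finite subsystems are. -/
def HomOmegaCompact (D : ConcreteDomain) : Prop :=
  ∀ (V : Type) (S : CSys D V), S.Countable →
    (∀ F : CSys D V, F ⊆ S → F.Finite → csysSat F) → csysSat S

/-! ## Syntax of ALCOSCC(D) -/

/-- A feature path: a feature name `f` or a role name followed by a feature name `r f`. -/
inductive Path : Type where
  | feat (f : ℕ)
  | rfeat (r f : ℕ)
deriving DecidableEq

/-- A feature pointer: `f` (value at the current individual) or `↗f` (value at the successor). -/
inductive FPtr : Type where
  | here (f : ℕ)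
  | next (f : ℕ)
deriving DecidableEq

mutual
/-- ALCOSCC(D) concepts. -/
inductive Concept (D : ConcreteDomain) : Type where
  | atom (A : ℕ)
  | nominal (a : ℕ)
  | neg (C : Concept D)
  | conj (C₁ C₂ : Concept D)
  /-- concrete-domain restriction `∃ p₁,…,p_k. P` -/
  | cdr (P : D.Pred) (paths : Fin (D.arity P) → Path)
  /-- successor restriction `succ(con)` -/
  | succr (con : QCon D)

/-- QFBAPA set terms whose set variables are role names, concepts and feature roles. -/
inductive SetTerm (D : ConcreteDomain) : Type where
  | role (r : ℕ)
  | concept (C : Concept D)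
  /-- feature role `P(α₁,…,α_k)` -/
  | frole (P : D.Pred) (args : Fin (D.arity P) → FPtr)
  | empty
  | univ
  | inter (s t : SetTerm D)
  | union (s t : SetTerm D)
  | compl (s : SetTerm D)

/-- Presburger-arithmetic expressions `n₀ + n₁·|s₁| + ⋯ + n_k·|s_k|`. -/
inductive LinExpr (D : ConcreteDomain) : Type where
  | const (n : ℕ)
  | add (l₁ l₂ : LinExpr D)
  /-- `n · |s|` -/
  | card (n : ℕ) (s : SetTerm D)

/-- QFBAPA set and numerical constraints. -/
inductive QCon (D : ConcreteDomain) : Type where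
  | subset (s t : SetTerm D)
  | seteq (s t : SetTerm D)
  | numeq (l₁ l₂ : LinExpr D)
  | numlt (l₁ l₂ : LinExpr D)
  | dvd (n : ℕ) (l : LinExpr D)
  | not (c : QCon D)
  | and (c₁ c₂ : QCon D)
  | or (c₁ c₂ : QCon D)
end

/-- A TBox: a finite set (list) of concept inclusions `C ⊑ D`. -/
abbrev TBox (D : ConcreteDomain) := List (Concept D × Concept D)

/-! ## Semantics -/

/-- An interpretation. -/
structure Interp (D : ConcreteDomain) : Type 1 where
  Δ : Type
  delta_nonempty : Nonempty Δ
  conc : ℕ → Set Δ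
  role : ℕ → Δ → Δ → Prop
  indiv : ℕ → Δ
  feat : ℕ → Δ → Option D.Dom

/-- The set of all role successors of `d` (over all role names). -/
def Interp.succs (I : Interp D) (d : I.Δ) : Set I.Δ := { e | ∃ r, I.role r d e }

/-- Finitely branching interpretations. -/
def FinBranching (I : Interp D) : Prop := ∀ d, (I.succs d).Finite

/-- The set of values of a feature path at `d`. -/
def pathVal (I : Interp D) (d : I.Δ) : Path → Set D.Dom
  | .feat f => { c | I.feat f d = some c }
  | .rfeat r f => { c | ∃ e, I.role r d e ∧ I.feat f e = some c }

def fptrVal (I : Interp D) (d e : I.Δ) : FPtr → Option D.Dom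
  | .here f => I.feat f d
  | .next f => I.feat f e

/-- `(d,e)` belongs to the feature role `P(α₁,…,α_k)`. -/
def froleHolds (I : Interp D) (P : D.Pred) (args : Fin (D.arity P) → FPtr)
    (d e : I.Δ) : Prop :=
  ∃ vals : Fin (D.arity P) → D.Dom,
    (∀ i, fptrVal I d e (args i) = some (vals i)) ∧ D.interp P vals

mutual
/-- Semantics of concepts. -/
noncomputable def csem (I : Interp D) : Concept D → Set I.Δ
  | .atom A => I.conc A
  | .nominal a => {I.indiv a}
  | .neg C => (csem I C)ᶜ
  | .conj C₁ C₂ => csem I C₁ ∩ csem I C₂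
  | .cdr P paths => { d | ∃ vals : Fin (D.arity P) → D.Dom,
      (∀ i, vals i ∈ pathVal I d (paths i)) ∧ D.interp P vals }
  | .succr con => { d | qsat I d con }

/-- Semantics of set terms, relative to the element `d` (whose role successors form `𝒰`). -/
noncomputable def ssem (I : Interp D) (d : I.Δ) : SetTerm D → Set I.Δ
  | .role r => { e | I.role r d e }
  | .concept C => csem I C ∩ I.succs d
  | .frole P args => { e ∈ I.succs d | froleHolds I P args d e }
  | .empty => ∅
  | .univ => I.succs d
  | .inter s t => ssem I d s ∩ ssem I d t
  | .union s t => ssem I d s ∪ ssem I d t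
  | .compl s => I.succs d \ ssem I d s

/-- Value of a PA expression at `d`. -/
noncomputable def lsem (I : Interp D) (d : I.Δ) : LinExpr D → ℕ
  | .const n => n
  | .add l₁ l₂ => lsem I d l₁ + lsem I d l₂
  | .card n s => n * (ssem I d s).ncard

/-- Satisfaction of a QFBAPA constraint by the assignment induced by `d`. -/
noncomputable def qsat (I : Interp D) (d : I.Δ) : QCon D → Prop
  | .subset s t => ssem I d s ⊆ ssem I d t
  | .seteq s t => ssem I d s = ssem I d t
  | .numeq l₁ l₂ => lsem I d l₁ = lsem I d l₂
  | .numlt l₁ l₂ => lsem I d l₁ < lsem I d l₂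
  | .dvd n l => n ∣ lsem I d l
  | .not c => ¬ qsat I d c
  | .and c₁ c₂ => qsat I d c₁ ∧ qsat I d c₂
  | .or c₁ c₂ => qsat I d c₁ ∨ qsat I d c₂
end

/-- `I` is a (finitely branching) model of the TBox `T`. -/
def IsModel (I : Interp D) (T : TBox D) : Prop :=
  FinBranching I ∧ ∀ ci ∈ T, csem I ci.1 ⊆ csem I ci.2

/-- Consistency: existence of a finitely branching model. -/
def Consistent (T : TBox D) : Prop := ∃ I : Interp D, IsModel I T

/-! ## Effective encodings -/

/-- An injective encoding of lists of naturals. -/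
def encL : List ℕ → ℕ
  | [] => 0
  | a :: l => Nat.pair a (encL l) + 1

def encPath : Path → ℕ
  | .feat f => Nat.pair 0 f
  | .rfeat r f => Nat.pair 1 (Nat.pair r f)

def encFPtr : FPtr → ℕ
  | .here f => 2 * f
  | .next f => 2 * f + 1

mutual
/-- Encoding of concepts, relative to an encoding `ep` of the predicates of `D`. -/
def encC (ep : D.Pred → ℕ) : Concept D → ℕ
  | .atom A => 7 * Nat.pair 0 A
  | .nominal a => 7 * Nat.pair 1 a
  | .neg C => 7 * Nat.pair 2 (encC ep C)
  | .conj C₁ C₂ => 7 * Nat.pair 3 (Nat.pair (encC ep C₁) (encC ep C₂))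
  | .cdr P paths => 7 * Nat.pair 4 (Nat.pair (ep P) (encL (List.ofFn fun i => encPath (paths i))))
  | .succr con => 7 * Nat.pair 5 (encQ ep con)

def encS (ep : D.Pred → ℕ) : SetTerm D → ℕ
  | .role r => 8 * Nat.pair 0 r
  | .concept C => 8 * Nat.pair 1 (encC ep C)
  | .frole P args => 8 * Nat.pair 2 (Nat.pair (ep P) (encL (List.ofFn fun i => encFPtr (args i))))
  | .empty => 8 * Nat.pair 3 0
  | .univ => 8 * Nat.pair 4 0
  | .inter s t => 8 * Nat.pair 5 (Nat.pair (encS ep s) (encS ep t))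
  | .union s t => 8 * Nat.pair 6 (Nat.pair (encS ep s) (encS ep t))
  | .compl s => 8 * Nat.pair 7 (encS ep s)

def encLE (ep : D.Pred → ℕ) : LinExpr D → ℕ
  | .const n => 3 * Nat.pair 0 n
  | .add l₁ l₂ => 3 * Nat.pair 1 (Nat.pair (encLE ep l₁) (encLE ep l₂))
  | .card n s => 3 * Nat.pair 2 (Nat.pair n (encS ep s))

def encQ (ep : D.Pred → ℕ) : QCon D → ℕ
  | .subset s t => 8 * Nat.pair 0 (Nat.pair (encS ep s) (encS ep t))
  | .seteq s t => 8 * Nat.pair 1 (Nat.pair (encS ep s) (encS ep t))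
  | .numeq l₁ l₂ => 8 * Nat.pair 2 (Nat.pair (encLE ep l₁) (encLE ep l₂))
  | .numlt l₁ l₂ => 8 * Nat.pair 3 (Nat.pair (encLE ep l₁) (encLE ep l₂))
  | .dvd n l => 8 * Nat.pair 4 (Nat.pair n (encLE ep l))
  | .not c => 8 * Nat.pair 5 (encQ ep c)
  | .and c₁ c₂ => 8 * Nat.pair 6 (Nat.pair (encQ ep c₁) (encQ ep c₂))
  | .or c₁ c₂ => 8 * Nat.pair 7 (Nat.pair (encQ ep c₁) (encQ ep c₂))
end

/-- Encoding of TBoxes. -/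
def encTBox (ep : D.Pred → ℕ) (T : TBox D) : ℕ :=
  encL (T.map fun ci => Nat.pair (encC ep ci.1) (encC ep ci.2))

/-- Encoding of a single constraint with variables from ℕ. -/
def encCstr (ep : D.Pred → ℕ) (c : Cstr D ℕ) : ℕ :=
  Nat.pair (ep c.P) (encL (List.ofFn c.args))

/-- Encoding of a finite constraint system (given as a list). -/
def encFCS (ep : D.Pred → ℕ) (S : List (Cstr D ℕ)) : ℕ := encL (S.map (encCstr ep))

/-- Satisfiability of a finite constraint system given as a list. -/
def fcsSat (S : List (Cstr D ℕ)) : Prop := ∃ h : ℕ → D.Dom, ∀ c ∈ S, cstrHolds h c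

/-- Decidability of CSP(D), relative to the predicate encoding `ep`. -/
def CSPDecidable (D : ConcreteDomain) (ep : D.Pred → ℕ) : Prop :=
  ∃ g : ℕ → Bool, Computable g ∧ ∀ S : List (Cstr D ℕ), (g (encFCS ep S) = true ↔ fcsSat S)



/-! ## Singleton predicates, feature assertions, homogeneity -/

/-- The extension of `D` with an additional unary singleton predicate `=_c` for every
element `c` of `D`, interpreted as `{c}`. -/
def ConcreteDomain.withSingletons (D : ConcreteDomain) : ConcreteDomain where
  Dom := D.Dom
  dom_nonempty := D.dom_nonempty
  Pred := D.Pred ⊕ D.Dom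
  arity := fun P => match P with
    | .inl P => D.arity P
    | .inr _ => 1
  interp := fun P => match P with
    | .inl P => fun t => D.interp P t
    | .inr c => fun t => t 0 = c

/-- A feature assertion `f(a, c)`. -/
abbrev FAssertion (D : ConcreteDomain) := ℕ × ℕ × D.Dom

/-- `I` satisfies the feature assertion `f(a,c)`, i.e. `f^I(a^I) = c`. -/
def SatAssertion {D : ConcreteDomain} (I : Interp D) (fa : FAssertion D) : Prop :=
  I.feat fa.1 (I.indiv fa.2.1) = some fa.2.2

/-- Consistency of a TBox together with a finite set of feature assertions. -/
def PairConsistent {D : ConcreteDomain} (TA : TBox D × List (FAssertion D)) : Prop :=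
  ∃ I : Interp D, IsModel I TA.1 ∧ ∀ fa ∈ TA.2, SatAssertion I fa

/-- `D` is homogeneous: every isomorphism between finite substructures of `D` extends to
an automorphism of `D`. -/
def Homogeneous (D : ConcreteDomain) : Prop :=
  ∀ s : Set D.Dom, s.Finite → ∀ g : D.Dom → D.Dom,
    Set.InjOn g s →
    (∀ (P : D.Pred) (t : Fin (D.arity P) → D.Dom), (∀ i, t i ∈ s) →
      (D.interp P t ↔ D.interp P (g ∘ t))) →
    ∃ h : D.Dom ≃ D.Dom,
      (∀ (P : D.Pred) (t : Fin (D.arity P) → D.Dom), D.interp P t ↔ D.interp P (⇑h ∘ t)) ∧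
      ∀ x ∈ s, h x = g x

/-- Satisfiability of a finite constraint system that may use constants in place of
variables. -/
def fcsSatC {D : ConcreteDomain} (S : List (Cstr D (ℕ ⊕ D.Dom))) : Prop :=
  ∃ h : ℕ → D.Dom, ∀ c ∈ S, D.interp c.P (Sum.elim h id ∘ c.args)

/-- Encoding of a finite constraint system with constants, relative to encodings of the
predicates and of the elements of `D`. -/
def encFCSC {D : ConcreteDomain} (ep : D.Pred → ℕ) (ce : D.Dom → ℕ)
    (S : List (Cstr D (ℕ ⊕ D.Dom))) : ℕ :=
  encL (S.map fun c => Nat.pair (ep c.P)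
    (encL (List.ofFn fun i => Sum.elim (fun v => 2 * v) (fun d => 2 * ce d + 1) (c.args i))))

/-- Decidability of CSP(D) for systems that may use constants. -/
def CSPCDecidable (D : ConcreteDomain) (ep : D.Pred → ℕ) (ce : D.Dom → ℕ) : Prop :=
  ∃ g : ℕ → Bool, Computable g ∧
    ∀ S : List (Cstr D (ℕ ⊕ D.Dom)), (g (encFCSC ep ce S) = true ↔ fcsSatC S)

/-- Encoding of the predicates of `D.withSingletons`. -/
def epS {D : ConcreteDomain} (ep : D.Pred → ℕ) (ce : D.Dom → ℕ) :
    (D.withSingletons).Pred → ℕ :=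
  fun P => match P with
    | .inl P => 2 * ep P
    | .inr c => 2 * ce c + 1

/-- Encoding of a TBox with feature assertions. -/
def encPair {D : ConcreteDomain} (ep : D.Pred → ℕ) (ce : D.Dom → ℕ)
    (TA : TBox D × List (FAssertion D)) : ℕ :=
  Nat.pair (encTBox ep TA.1)
    (encL (TA.2.map fun fa => Nat.pair fa.1 (Nat.pair fa.2.1 (ce fa.2.2))))


/-! ### Helper lemmas about the encodings -/

theorem encL_eq_encode : ∀ l : List ℕ, encL l = Encodable.encode l
  | [] => rfl
  | a :: l => by
    rw [Encodable.encode_list_cons, encL, encL_eq_encode l]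
    simp

theorem le_encL_of_mem {a : ℕ} {l : List ℕ} (h : a ∈ l) : a + 1 ≤ encL l := by
  induction l with
  | nil => cases h
  | cons b l ih =>
    rcases List.mem_cons.1 h with rfl | h
    · exact Nat.succ_le_succ (Nat.left_le_pair _ _)
    · exact le_trans (ih h) (le_trans (Nat.right_le_pair _ _) (Nat.le_succ _))

/-- The feature name of a path. -/
def pathF : Path → ℕ
  | .feat f => f
  | .rfeat _ f => f

/-- The feature name of a feature pointer. -/
def ptrF : FPtr → ℕ
  | .here f => f
  | .next f => f

mutual
/-- A strict upper bound for the feature names occurring in a concept. -/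
def mfC : Concept D → ℕ
  | .atom _ => 0
  | .nominal _ => 0
  | .neg C => mfC C
  | .conj C₁ C₂ => max (mfC C₁) (mfC C₂)
  | .cdr _ paths => Finset.univ.sup fun i => pathF (paths i) + 1
  | .succr con => mfQ con

/-- A strict upper bound for the feature names occurring in a set term. -/
def mfS : SetTerm D → ℕ
  | .role _ => 0
  | .concept C => mfC C
  | .frole _ args => Finset.univ.sup fun i => ptrF (args i) + 1
  | .empty => 0
  | .univ => 0
  | .inter s t => max (mfS s) (mfS t)
  | .union s t => max (mfS s) (mfS t)
  | .compl s => mfS s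

/-- A strict upper bound for the feature names occurring in a linear expression. -/
def mfL : LinExpr D → ℕ
  | .const _ => 0
  | .add l₁ l₂ => max (mfL l₁) (mfL l₂)
  | .card _ s => mfS s

/-- A strict upper bound for the feature names occurring in a QFBAPA constraint. -/
def mfQ : QCon D → ℕ
  | .subset s t => max (mfS s) (mfS t)
  | .seteq s t => max (mfS s) (mfS t)
  | .numeq l₁ l₂ => max (mfL l₁) (mfL l₂)
  | .numlt l₁ l₂ => max (mfL l₁) (mfL l₂)
  | .dvd _ l => mfL l
  | .not c => mfQ c
  | .and c₁ c₂ => max (mfQ c₁) (mfQ c₂)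
  | .or c₁ c₂ => max (mfQ c₁) (mfQ c₂)
end
theorem pathF_le_encPath (p : Path) : pathF p ≤ encPath p := by
  cases p with
  | feat f => exact Nat.right_le_pair 0 f
  | rfeat r f => exact le_trans (Nat.right_le_pair r f) (Nat.right_le_pair _ _)

theorem ptrF_le_encFPtr (p : FPtr) : ptrF p ≤ encFPtr p := by
  cases p with
  | here f => simpa [ptrF, encFPtr] using Nat.le_mul_of_pos_left f (by norm_num)
  | next f =>
    simp only [ptrF, encFPtr]
    exact le_trans (Nat.le_mul_of_pos_left f (by norm_num)) (Nat.le_succ _)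

private theorem le_seven_pair {a x : ℕ} (h : a ≤ x) (t : ℕ) : a ≤ 7 * Nat.pair t x :=
  le_trans (le_trans h (Nat.right_le_pair t x)) (Nat.le_mul_of_pos_left _ (by norm_num))

private theorem le_eight_pair {a x : ℕ} (h : a ≤ x) (t : ℕ) : a ≤ 8 * Nat.pair t x :=
  le_trans (le_trans h (Nat.right_le_pair t x)) (Nat.le_mul_of_pos_left _ (by norm_num))

private theorem le_three_pair {a x : ℕ} (h : a ≤ x) (t : ℕ) : a ≤ 3 * Nat.pair t x :=
  le_trans (le_trans h (Nat.right_le_pair t x)) (Nat.le_mul_of_pos_left _ (by norm_num))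

mutual
theorem mfC_le_encC (ep : D.Pred → ℕ) : ∀ C : Concept D, mfC C ≤ encC ep C
  | .atom _ => Nat.zero_le _
  | .nominal _ => Nat.zero_le _
  | .neg C => le_seven_pair (mfC_le_encC ep C) 2
  | .conj C₁ C₂ => le_seven_pair (max_le
      (le_trans (mfC_le_encC ep C₁) (Nat.left_le_pair _ _))
      (le_trans (mfC_le_encC ep C₂) (Nat.right_le_pair _ _))) 3
  | .cdr P paths => le_seven_pair (le_trans (Finset.sup_le (fun i _ => by
      calc pathF (paths i) + 1 ≤ encPath (paths i) + 1 :=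
            Nat.succ_le_succ (pathF_le_encPath _)
        _ ≤ encL (List.ofFn fun i => encPath (paths i)) :=
            le_encL_of_mem (by simp [List.mem_ofFn])))
      (Nat.right_le_pair _ _)) 4
  | .succr con => le_seven_pair (mfQ_le_encQ ep con) 5

theorem mfS_le_encS (ep : D.Pred → ℕ) : ∀ s : SetTerm D, mfS s ≤ encS ep s
  | .role _ => Nat.zero_le _
  | .concept C => le_eight_pair (mfC_le_encC ep C) 1
  | .frole P args => le_eight_pair (le_trans (Finset.sup_le (fun i _ => by
      calc ptrF (args i) + 1 ≤ encFPtr (args i) + 1 :=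
            Nat.succ_le_succ (ptrF_le_encFPtr _)
        _ ≤ encL (List.ofFn fun i => encFPtr (args i)) :=
            le_encL_of_mem (by simp [List.mem_ofFn])))
      (Nat.right_le_pair _ _)) 2
  | .empty => Nat.zero_le _
  | .univ => Nat.zero_le _
  | .inter s t => le_eight_pair (max_le
      (le_trans (mfS_le_encS ep s) (Nat.left_le_pair _ _))
      (le_trans (mfS_le_encS ep t) (Nat.right_le_pair _ _))) 5
  | .union s t => le_eight_pair (max_le
      (le_trans (mfS_le_encS ep s) (Nat.left_le_pair _ _))
      (le_trans (mfS_le_encS ep t) (Nat.right_le_pair _ _))) 6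
  | .compl s => le_eight_pair (mfS_le_encS ep s) 7

theorem mfL_le_encLE (ep : D.Pred → ℕ) : ∀ l : LinExpr D, mfL l ≤ encLE ep l
  | .const _ => Nat.zero_le _
  | .add l₁ l₂ => le_three_pair (max_le
      (le_trans (mfL_le_encLE ep l₁) (Nat.left_le_pair _ _))
      (le_trans (mfL_le_encLE ep l₂) (Nat.right_le_pair _ _))) 1
  | .card _ s => le_three_pair (le_trans (mfS_le_encS ep s) (Nat.right_le_pair _ _)) 2

theorem mfQ_le_encQ (ep : D.Pred → ℕ) : ∀ c : QCon D, mfQ c ≤ encQ ep c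
  | .subset s t => le_eight_pair (max_le
      (le_trans (mfS_le_encS ep s) (Nat.left_le_pair _ _))
      (le_trans (mfS_le_encS ep t) (Nat.right_le_pair _ _))) 0
  | .seteq s t => le_eight_pair (max_le
      (le_trans (mfS_le_encS ep s) (Nat.left_le_pair _ _))
      (le_trans (mfS_le_encS ep t) (Nat.right_le_pair _ _))) 1
  | .numeq l₁ l₂ => le_eight_pair (max_le
      (le_trans (mfL_le_encLE ep l₁) (Nat.left_le_pair _ _))
      (le_trans (mfL_le_encLE ep l₂) (Nat.right_le_pair _ _))) 2
  | .numlt l₁ l₂ => le_eight_pair (max_le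
      (le_trans (mfL_le_encLE ep l₁) (Nat.left_le_pair _ _))
      (le_trans (mfL_le_encLE ep l₂) (Nat.right_le_pair _ _))) 3
  | .dvd _ l => le_eight_pair (le_trans (mfL_le_encLE ep l) (Nat.right_le_pair _ _)) 4
  | .not c => le_eight_pair (mfQ_le_encQ ep c) 5
  | .and c₁ c₂ => le_eight_pair (max_le
      (le_trans (mfQ_le_encQ ep c₁) (Nat.left_le_pair _ _))
      (le_trans (mfQ_le_encQ ep c₂) (Nat.right_le_pair _ _))) 6
  | .or c₁ c₂ => le_eight_pair (max_le
      (le_trans (mfQ_le_encQ ep c₁) (Nat.left_le_pair _ _))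
      (le_trans (mfQ_le_encQ ep c₂) (Nat.right_le_pair _ _))) 7
end
/-! ### Invariance of the semantics under feature transformations

If the features of an interpretation are modified by applying, at each element `d`, an
automorphism `H d` of `D` (constant along role edges) to all feature values of features
below a bound `B`, then the semantics of all concepts whose features are below `B` is
unchanged. -/

section Invariance

variable (I : Interp D) (H : I.Δ → D.Dom ≃ D.Dom) (F : ℕ → I.Δ → Option D.Dom) (B : ℕ)

theorem succs_update : ({I with feat := F} : Interp D).succs = I.succs := rfl

variable (hH : ∀ (d : I.Δ) (P : D.Pred) (t : Fin (D.arity P) → D.Dom),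
    D.interp P t ↔ D.interp P (⇑(H d) ∘ t))
  (hedge : ∀ r d e, I.role r d e → H d = H e)
  (hF : ∀ f d, f < B → F f d = Option.map (H d) (I.feat f d))

include hH hedge hF

omit hH in
theorem pathVal_update (d : I.Δ) (p : Path) (hp : pathF p < B) :
    pathVal {I with feat := F} d p = ⇑(H d) '' pathVal I d p := by
  cases p with
  | feat f =>
    ext c
    simp only [pathVal, Set.mem_setOf_eq, Set.mem_image]
    rw [hF f d hp]
    cases I.feat f d <;> simp
  | rfeat r f =>
    ext c
    simp only [pathVal, Set.mem_setOf_eq, Set.mem_image]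
    constructor
    · rintro ⟨e, hre, hfe⟩
      rw [hF f e hp] at hfe
      rcases Option.map_eq_some_iff.1 hfe with ⟨v, hv, rfl⟩
      exact ⟨v, ⟨e, hre, hv⟩, by rw [hedge r d e hre]⟩
    · rintro ⟨v, ⟨e, hre, hv⟩, rfl⟩
      refine ⟨e, hre, ?_⟩
      rw [hF f e hp, hv, ← hedge r d e hre]
      rfl

theorem froleHolds_update (P : D.Pred) (args : Fin (D.arity P) → FPtr) (d e : I.Δ)
    (he : e ∈ I.succs d) (hargs : ∀ i, ptrF (args i) < B) :
    froleHolds {I with feat := F} P args d e ↔ froleHolds I P args d e := by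
  obtain ⟨r, hr⟩ := he
  have key : ∀ i, fptrVal ({I with feat := F} : Interp D) d e (args i) =
      Option.map (H d) (fptrVal I d e (args i)) := by
    intro i
    cases hi : args i with
    | here f =>
      have := hargs i; rw [hi] at this
      simpa [fptrVal] using hF f d this
    | next f =>
      have := hargs i; rw [hi] at this
      have h2 := hF f e this
      rw [hedge r d e hr]
      simpa [fptrVal] using h2
  constructor
  · rintro ⟨vals, hvals, hP⟩
    refine ⟨fun i => (H d).symm (vals i), fun i => ?_, ?_⟩
    · have := hvals i
      rw [key i] at this
      rcases Option.map_eq_some_iff.1 this with ⟨v, hv, hveq⟩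
      rw [hv]
      simp [← hveq]
    · rw [hH d P]
      convert hP using 2
      funext i
      simp
  · rintro ⟨vals, hvals, hP⟩
    refine ⟨fun i => H d (vals i), fun i => ?_, ?_⟩
    · rw [key i, hvals i]; rfl
    · exact (hH d P vals).mp hP

mutual
theorem csem_update : ∀ C : Concept D, mfC C ≤ B →
    csem {I with feat := F} C = csem I C
  | .atom A, _ => rfl
  | .nominal a, _ => rfl
  | .neg C, h => by
    simp only [csem]
    rw [csem_update C h]
  | .conj C₁ C₂, h => by
    simp only [csem]
    rw [csem_update C₁ (le_trans (le_max_left _ _) h),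
        csem_update C₂ (le_trans (le_max_right _ _) h)]
  | .cdr P paths, h => by
    have hp : ∀ i, pathF (paths i) < B := by
      intro i
      simp only [mfC] at h
      exact lt_of_lt_of_le (Nat.lt_succ_self _) (le_trans (Finset.le_sup (f := fun i => pathF (paths i) + 1) (Finset.mem_univ i)) h)
    simp only [csem]
    ext d
    simp only [Set.mem_setOf_eq]
    constructor
    · rintro ⟨vals, hvals, hP⟩
      have hv : ∀ i, ∃ w, w ∈ pathVal I d (paths i) ∧ H d w = vals i := by
        intro i
        have := hvals i
        rw [pathVal_update I H F B hedge hF d _ (hp i)] at this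
        exact this
      choose w hw hweq using hv
      refine ⟨w, hw, ?_⟩
      rw [hH d P]
      convert hP using 1
      exact funext fun i => hweq i
    · rintro ⟨vals, hvals, hP⟩
      refine ⟨fun i => H d (vals i), fun i => ?_, ?_⟩
      · rw [pathVal_update I H F B hedge hF d _ (hp i)]
        exact ⟨vals i, hvals i, rfl⟩
      · exact (hH d P vals).mp hP
  | .succr con, h => by
    simp only [csem]
    ext d
    simp only [Set.mem_setOf_eq]
    exact qsat_update d con h

theorem ssem_update : ∀ (d : I.Δ) (s : SetTerm D), mfS s ≤ B →
    ssem {I with feat := F} d s = ssem I d s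
  | d, .role r, _ => rfl
  | d, .concept C, h => by
    simp only [ssem]
    rw [csem_update C h, succs_update]
  | d, .frole P args, h => by
    have hp : ∀ i, ptrF (args i) < B := by
      intro i
      simp only [mfS] at h
      exact lt_of_lt_of_le (Nat.lt_succ_self _) (le_trans (Finset.le_sup (f := fun i => ptrF (args i) + 1) (Finset.mem_univ i)) h)
    simp only [ssem]
    ext e
    simp only [Set.mem_setOf_eq, succs_update]
    exact and_congr_right fun he =>
      froleHolds_update I H F B hH hedge hF P args d e he hp
  | d, .empty, _ => rfl
  | d, .univ, _ => rfl
  | d, .inter s t, h => by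
    simp only [ssem]
    rw [ssem_update d s (le_trans (le_max_left _ _) h),
        ssem_update d t (le_trans (le_max_right _ _) h)]
  | d, .union s t, h => by
    simp only [ssem]
    rw [ssem_update d s (le_trans (le_max_left _ _) h),
        ssem_update d t (le_trans (le_max_right _ _) h)]
  | d, .compl s, h => by
    simp only [ssem]
    rw [ssem_update d s h, succs_update]

theorem lsem_update : ∀ (d : I.Δ) (l : LinExpr D), mfL l ≤ B →
    lsem {I with feat := F} d l = lsem I d l
  | d, .const n, _ => rfl
  | d, .add l₁ l₂, h => by
    simp only [lsem]
    rw [lsem_update d l₁ (le_trans (le_max_left _ _) h),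
        lsem_update d l₂ (le_trans (le_max_right _ _) h)]
  | d, .card n s, h => by
    simp only [lsem]
    rw [ssem_update d s h]

theorem qsat_update : ∀ (d : I.Δ) (c : QCon D), mfQ c ≤ B →
    (qsat {I with feat := F} d c ↔ qsat I d c)
  | d, .subset s t, h => by
    simp only [qsat]
    rw [ssem_update d s (le_trans (le_max_left _ _) h),
        ssem_update d t (le_trans (le_max_right _ _) h)]
  | d, .seteq s t, h => by
    simp only [qsat]
    rw [ssem_update d s (le_trans (le_max_left _ _) h),
        ssem_update d t (le_trans (le_max_right _ _) h)]
  | d, .numeq l₁ l₂, h => by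
    simp only [qsat]
    rw [lsem_update d l₁ (le_trans (le_max_left _ _) h),
        lsem_update d l₂ (le_trans (le_max_right _ _) h)]
  | d, .numlt l₁ l₂, h => by
    simp only [qsat]
    rw [lsem_update d l₁ (le_trans (le_max_left _ _) h),
        lsem_update d l₂ (le_trans (le_max_right _ _) h)]
  | d, .dvd n l, h => by
    simp only [qsat]
    rw [lsem_update d l h]
  | d, .not c, h => by
    simp only [qsat]
    rw [qsat_update d c h]
  | d, .and c₁ c₂, h => by
    simp only [qsat]
    rw [qsat_update d c₁ (le_trans (le_max_left _ _) h),
        qsat_update d c₂ (le_trans (le_max_right _ _) h)]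
  | d, .or c₁ c₂, h => by
    simp only [qsat]
    rw [qsat_update d c₁ (le_trans (le_max_left _ _) h),
        qsat_update d c₂ (le_trans (le_max_right _ _) h)]
end

end Invariance
/-! ### Auxiliary concepts and their semantics -/

/-- A concept denoting the empty set. -/
def botC : Concept D := .conj (.atom 0) (.neg (.atom 0))

/-- A concept denoting the whole domain. -/
def topC : Concept D := .neg botC

/-- Disjunction of concepts. -/
def orC (C₁ C₂ : Concept D) : Concept D := .neg (.conj (.neg C₁) (.neg C₂))

/-- Disjunction of a list of concepts. -/
def bigOr : List (Concept D) → Concept D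
  | [] => botC
  | C :: l => orC C (bigOr l)

theorem csem_botC (I : Interp D) : csem I botC = ∅ := by
  simp [botC, csem]

theorem csem_topC (I : Interp D) : csem I topC = Set.univ := by
  simp [topC, csem, csem_botC]

theorem csem_orC (I : Interp D) (C₁ C₂ : Concept D) :
    csem I (orC C₁ C₂) = csem I C₁ ∪ csem I C₂ := by
  simp [orC, csem, Set.compl_inter]

theorem mem_csem_bigOr (I : Interp D) (L : List (Concept D)) (d : I.Δ) :
    d ∈ csem I (bigOr L) ↔ ∃ C ∈ L, d ∈ csem I C := by
  induction L with
  | nil => simp [bigOr, csem_botC]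
  | cons C l ih => simp [bigOr, csem_orC, ih]

theorem pathVal_feat (I : Interp D) (d : I.Δ) (f : ℕ) :
    pathVal I d (.feat f) = { c | I.feat f d = some c } := rfl

/-- The concept expressing that feature `f` has a defined value. -/
def defC (preds : List D.Pred) (f : ℕ) : Concept D :=
  bigOr ((preds.filter (fun P => 0 < D.arity P)).map fun P => .cdr P (fun _ => .feat f))

theorem mem_csem_defC (I : Interp D) (hJEPD : JEPD D) (preds : List D.Pred)
    (hpreds : ∀ P : D.Pred, P ∈ preds) (P₁ : D.Pred) (hP₁ : 0 < D.arity P₁)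
    (f : ℕ) (d : I.Δ) :
    d ∈ csem I (defC preds f) ↔ ∃ v, I.feat f d = some v := by
  rw [defC, mem_csem_bigOr]
  constructor
  · rintro ⟨C, hC, hd⟩
    simp only [List.mem_map, List.mem_filter] at hC
    obtain ⟨P, ⟨-, hpos⟩, rfl⟩ := hC
    simp only [csem, Set.mem_setOf_eq] at hd
    obtain ⟨vals, hvals, -⟩ := hd
    have := hvals ⟨0, by simpa using hpos⟩
    rw [pathVal_feat] at this
    exact ⟨_, this⟩
  · rintro ⟨v, hv⟩
    obtain ⟨P, ⟨hP, hint⟩, -⟩ := hJEPD (D.arity P₁) ⟨P₁, rfl⟩ (fun _ => v)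
    refine ⟨.cdr P (fun _ => .feat f), ?_, ?_⟩
    · simp only [List.mem_map, List.mem_filter]
      exact ⟨P, ⟨by simp [hpreds], by simpa [hP] using hP₁⟩, rfl⟩
    · simp only [csem, Set.mem_setOf_eq]
      exact ⟨fun _ => v, fun i => by simp [pathVal_feat, hv], hint⟩

/-- Evaluation of a quantifier-free formula only depends on the atoms. -/
theorem QFF.Eval_congr {V : Type} (φ : QFF D V) (α β : V → D.Dom)
    (h : ∀ (P : D.Pred) (args : Fin (D.arity P) → V),
      D.interp P (α ∘ args) ↔ D.interp P (β ∘ args)) :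
    φ.Eval α ↔ φ.Eval β := by
  induction φ with
  | atom P args => exact h P args
  | not ψ ih => simp only [QFF.Eval]; rw [ih]
  | and ψ χ ihψ ihχ => simp only [QFF.Eval]; rw [ihψ, ihχ]
  | or ψ χ ihψ ihχ => simp only [QFF.Eval]; rw [ihψ, ihχ]

/-- Translation of a quantifier-free formula in two variables into a concept
comparing the values of features `f` (false) and `g` (true). -/
def cQFF : QFF D Bool → ℕ → ℕ → Concept D
  | .atom P args, f, g => .cdr P fun i => .feat (bif args i then g else f)
  | .not ψ, f, g => .neg (cQFF ψ f g)
  | .and ψ χ, f, g => .conj (cQFF ψ f g) (cQFF χ f g)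
  | .or ψ χ, f, g => orC (cQFF ψ f g) (cQFF χ f g)

theorem mem_csem_cQFF (I : Interp D) (ψ : QFF D Bool) (f g : ℕ) (d : I.Δ) (u v : D.Dom)
    (hf : I.feat f d = some u) (hg : I.feat g d = some v) :
    d ∈ csem I (cQFF ψ f g) ↔ ψ.Eval (fun b => bif b then v else u) := by
  induction ψ with
  | atom P args =>
    simp only [cQFF, csem, Set.mem_setOf_eq, QFF.Eval]
    constructor
    · rintro ⟨vals, hvals, hP⟩
      have hv : ∀ i, vals i = (fun b => bif b then v else u) (args i) := by
        intro i
        have := hvals i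
        cases hai : args i <;> simp only [hai] at this <;>
          simp only [cond_true, cond_false, pathVal_feat, Set.mem_setOf_eq, hf, hg,
            Option.some.injEq] at this <;> simp [hai, this.symm]
      convert hP using 1
      exact (funext hv).symm
    · intro hP
      refine ⟨_, fun i => ?_, hP⟩
      cases hai : args i <;> simp [hai, pathVal_feat, hf, hg]
  | not ψ ih => simp only [cQFF, csem, Set.mem_compl_iff, QFF.Eval]; rw [ih]
  | and ψ χ ihψ ihχ =>
    simp only [cQFF, csem, Set.mem_inter_iff, QFF.Eval]; rw [ihψ, ihχ]
  | or ψ χ ihψ ihχ =>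
    simp only [cQFF, csem_orC, Set.mem_union, QFF.Eval]; rw [ihψ, ihχ]

/-- Translation of a quantifier-free formula in two variables into a set term
comparing the value of feature `g` here (false) and at the successor (true). -/
def sQFF : QFF D Bool → ℕ → SetTerm D
  | .atom P args, g => .frole P fun i => bif args i then .next g else .here g
  | .not ψ, g => .compl (sQFF ψ g)
  | .and ψ χ, g => .inter (sQFF ψ g) (sQFF χ g)
  | .or ψ χ, g => .union (sQFF ψ g) (sQFF χ g)

theorem mem_ssem_sQFF (I : Interp D) (ψ : QFF D Bool) (g : ℕ) (d e : I.Δ)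
    (he : e ∈ I.succs d) (u v : D.Dom)
    (hu : I.feat g d = some u) (hv : I.feat g e = some v) :
    e ∈ ssem I d (sQFF ψ g) ↔ ψ.Eval (fun b => bif b then v else u) := by
  induction ψ with
  | atom P args =>
    simp only [sQFF, ssem, Set.mem_setOf_eq, QFF.Eval, Set.mem_sep_iff]
    rw [and_iff_right he]
    constructor
    · rintro ⟨vals, hvals, hP⟩
      have hw : ∀ i, vals i = (fun b => bif b then v else u) (args i) := by
        intro i
        have := hvals i
        cases hai : args i <;> simp only [hai] at this <;>
          simp only [cond_true, cond_false, fptrVal, hu, hv, Option.some.injEq] at this <;>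
          simp [hai, this.symm]
      convert hP using 1
      exact (funext hw).symm
    · intro hP
      refine ⟨_, fun i => ?_, hP⟩
      cases hai : args i <;> simp [hai, fptrVal, hu, hv]
  | not ψ ih =>
    simp only [sQFF, ssem, Set.mem_diff]
    rw [and_iff_right he, ih]
    simp [QFF.Eval]
  | and ψ χ ihψ ihχ =>
    simp only [sQFF, ssem, Set.mem_inter_iff, QFF.Eval]; rw [ihψ, ihχ]
  | or ψ χ ihψ ihχ =>
    simp only [sQFF, ssem, Set.mem_union, QFF.Eval]; rw [ihψ, ihχ]

theorem csem_neg (I : Interp D) (C : Concept D) : csem I (.neg C) = (csem I C)ᶜ := by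
  simp only [csem]

theorem csem_conj (I : Interp D) (C₁ C₂ : Concept D) :
    csem I (.conj C₁ C₂) = csem I C₁ ∩ csem I C₂ := by
  simp only [csem]

theorem csem_nominal (I : Interp D) (a : ℕ) : csem I (.nominal a) = {I.indiv a} := by
  simp only [csem]
/-! ### The reduction -/

/-- All lists of length `k` over `{0, …, n-1}` (patterns for predicate arguments). -/
def patterns : ℕ → ℕ → List (List ℕ)
  | 0, _ => [[]]
  | k + 1, n => (List.range n).flatMap fun m => (patterns k n).map (m :: ·)

theorem patterns_sound {k n : ℕ} {l : List ℕ} (h : l ∈ patterns k n) :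
    l.length = k ∧ ∀ m ∈ l, m < n := by
  induction k generalizing l with
  | zero => simp [patterns] at h; simp [h]
  | succ k ih =>
    simp only [patterns, List.mem_flatMap, List.mem_map, List.mem_range] at h
    obtain ⟨m, hm, l', hl', rfl⟩ := h
    obtain ⟨h1, h2⟩ := ih hl'
    refine ⟨by simp [h1], ?_⟩
    intro x hx
    rcases List.mem_cons.1 hx with rfl | hx
    · exact hm
    · exact h2 x hx

theorem patterns_complete {k n : ℕ} (j : Fin k → Fin n) :
    (List.ofFn fun i => (j i : ℕ)) ∈ patterns k n := by
  induction k with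
  | zero => simp [patterns]
  | succ k ih =>
    simp only [patterns, List.mem_flatMap, List.mem_map, List.mem_range, List.ofFn_succ]
    exact ⟨j 0, (j 0).isLt, _, ih (fun i => j i.succ), rfl⟩

/-- Membership of a `cdr` concept all of whose paths are direct features. -/
theorem mem_csem_cdr_feat (I : Interp D) (P : D.Pred) (h : Fin (D.arity P) → ℕ)
    (d : I.Δ) (vals : Fin (D.arity P) → D.Dom)
    (hdef : ∀ i, I.feat (h i) d = some (vals i)) :
    d ∈ csem I (.cdr P fun i => .feat (h i)) ↔ D.interp P vals := by
  simp only [csem, Set.mem_setOf_eq]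
  constructor
  · rintro ⟨vals', hvals', hP⟩
    have : vals' = vals := by
      funext i
      have := hvals' i
      simp only [pathVal_feat, Set.mem_setOf_eq, hdef i, Option.some.injEq] at this
      exact this.symm
    rwa [this] at hP
  · intro hP
    exact ⟨vals, fun i => by simp [pathVal_feat, hdef i], hP⟩

section Red

variable (ep : D.Pred → ℕ) (ce : D.Dom → ℕ) (gC : ℕ → Bool) (φ : QFF D Bool)
  (preds : List D.Pred)

/-- Default assertion. -/
noncomputable def dfltA : FAssertion D := (0, 0, Classical.choice D.dom_nonempty)

/-- The `i`-th asserted constant. -/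
noncomputable def cN (TA : TBox D × List (FAssertion D)) (m : ℕ) : D.Dom :=
  (TA.2.getD m dfltA).2.2

/-- The `i`-th asserted feature. -/
noncomputable def fN (TA : TBox D × List (FAssertion D)) (m : ℕ) : ℕ :=
  (TA.2.getD m dfltA).1

/-- The `i`-th asserted individual. -/
noncomputable def aN (TA : TBox D × List (FAssertion D)) (m : ℕ) : ℕ :=
  (TA.2.getD m dfltA).2.1

/-- Names of the fresh features start above the code of the input. -/
def base (TA : TBox D × List (FAssertion D)) : ℕ := encPair ep ce TA + 1

/-- Whether the predicate `P` holds on the tuple of asserted constants selected by the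
pattern `l`, as computed by the constraint-satisfaction decider `gC`. -/
noncomputable def bitP (TA : TBox D × List (FAssertion D)) (P : D.Pred) (l : List ℕ) : Bool :=
  gC (encL [Nat.pair (ep P) (encL (l.map fun m => 2 * ce (cN TA m) + 1))])

/-- The concept asserting that the fresh features selected by the pattern `l`
satisfy `P`. -/
noncomputable def typeCon (TA : TBox D × List (FAssertion D)) (P : D.Pred) (l : List ℕ) :
    Concept D :=
  .cdr P fun i => .feat (base ep ce TA + l.getD i.val 0)

/-- The additional TBox axioms replacing the feature assertions. -/
noncomputable def extraAx (TA : TBox D × List (FAssertion D)) : TBox D :=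
  ((List.range TA.2.length).map fun j => (topC, defC preds (base ep ce TA + j))) ++
  ((List.range TA.2.length).map fun j =>
    (topC, .succr (.subset .univ (sQFF φ (base ep ce TA + j))))) ++
  (preds.flatMap fun P => (patterns (D.arity P) TA.2.length).map fun l =>
    (topC, if bitP ep ce gC TA P l then typeCon ep ce TA P l
           else .neg (typeCon ep ce TA P l))) ++
  ((List.range TA.2.length).map fun i => ((.nominal (aN TA i) : Concept D),
    .conj (defC preds (fN TA i))
      (.conj (defC preds (base ep ce TA + i)) (cQFF φ (fN TA i) (base ep ce TA + i)))))

/-- The reduced TBox. -/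
noncomputable def red (TA : TBox D × List (FAssertion D)) : TBox D :=
  TA.1 ++ extraAx ep ce gC φ preds TA

theorem bitP_correct (hgC : ∀ S : List (Cstr D (ℕ ⊕ D.Dom)),
      (gC (encFCSC ep ce S) = true ↔ fcsSatC S))
    (TA : TBox D × List (FAssertion D)) (P : D.Pred) (l : List ℕ)
    (hlen : l.length = D.arity P) :
    bitP ep ce gC TA P l = true ↔
      D.interp P fun i => cN TA (l.getD i.val 0) := by
  have hcode : encFCSC ep ce [⟨P, fun i => Sum.inr (cN TA (l.getD i.val 0))⟩] =
      encL [Nat.pair (ep P) (encL (l.map fun m => 2 * ce (cN TA m) + 1))] := by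
    simp only [encFCSC, List.map_cons, List.map_nil, Sum.elim_inr]
    have heq : (List.ofFn fun i : Fin (D.arity P) => 2 * ce (cN TA (l.getD (i : ℕ) 0)) + 1) =
        l.map (fun m => 2 * ce (cN TA m) + 1) := by
      apply List.ext_getElem
      · simp [hlen]
      · intro i h1 h2
        simp only [List.getElem_ofFn, List.getElem_map]
        congr 2
        rw [List.getD_eq_getElem]
    rw [heq]
  rw [bitP, ← hcode, hgC]
  constructor
  · rintro ⟨h, hh⟩
    have := hh _ (List.mem_singleton_self _)
    exact this
  · intro h
    refine ⟨fun _ => Classical.choice D.dom_nonempty, ?_⟩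
    intro c hc
    rw [List.mem_singleton] at hc
    subst hc
    exact h

end Red

/-- Bounds on the data of the input from its code. -/
theorem mfC_lt_base (ep : D.Pred → ℕ) (ce : D.Dom → ℕ)
    (TA : TBox D × List (FAssertion D)) {ci : Concept D × Concept D} (h : ci ∈ TA.1) :
    mfC ci.1 < base ep ce TA ∧ mfC ci.2 < base ep ce TA := by
  have hm : Nat.pair (encC ep ci.1) (encC ep ci.2) + 1 ≤ encTBox ep TA.1 :=
    le_encL_of_mem (List.mem_map_of_mem h)
  have hb : encTBox ep TA.1 ≤ encPair ep ce TA := Nat.left_le_pair _ _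
  constructor
  · calc mfC ci.1 ≤ encC ep ci.1 := mfC_le_encC ep ci.1
      _ ≤ Nat.pair (encC ep ci.1) (encC ep ci.2) := Nat.left_le_pair _ _
      _ < encTBox ep TA.1 := hm
      _ ≤ base ep ce TA := le_trans hb (Nat.le_succ _)
  · calc mfC ci.2 ≤ encC ep ci.2 := mfC_le_encC ep ci.2
      _ ≤ Nat.pair (encC ep ci.1) (encC ep ci.2) := Nat.right_le_pair _ _
      _ < encTBox ep TA.1 := hm
      _ ≤ base ep ce TA := le_trans hb (Nat.le_succ _)

theorem fa_lt_base (ep : D.Pred → ℕ) (ce : D.Dom → ℕ)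
    (TA : TBox D × List (FAssertion D)) {fa : FAssertion D} (h : fa ∈ TA.2) :
    fa.1 < base ep ce TA := by
  have hm : Nat.pair fa.1 (Nat.pair fa.2.1 (ce fa.2.2)) + 1 ≤
      encL (TA.2.map fun fa => Nat.pair fa.1 (Nat.pair fa.2.1 (ce fa.2.2))) :=
    le_encL_of_mem (List.mem_map_of_mem h)
  calc fa.1 < Nat.pair fa.1 (Nat.pair fa.2.1 (ce fa.2.2)) + 1 :=
        Nat.lt_succ_of_le (Nat.left_le_pair _ _)
    _ ≤ encL (TA.2.map fun fa => Nat.pair fa.1 (Nat.pair fa.2.1 (ce fa.2.2))) := hm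
    _ ≤ encPair ep ce TA := Nat.right_le_pair _ _
    _ < base ep ce TA := Nat.lt_succ_self _
theorem red_forward (ep : D.Pred → ℕ) (ce : D.Dom → ℕ) (gC : ℕ → Bool) (φ : QFF D Bool)
    (preds : List D.Pred)
    (hJEPD : JEPD D)
    (hgC : ∀ S : List (Cstr D (ℕ ⊕ D.Dom)), (gC (encFCSC ep ce S) = true ↔ fcsSatC S))
    (hφ : ∀ a b : D.Dom, φ.Eval (fun v => bif v then b else a) ↔ a = b)
    (hpreds : ∀ P : D.Pred, P ∈ preds)
    (P₁ : D.Pred) (hP₁ : 0 < D.arity P₁)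
    (TA : TBox D × List (FAssertion D))
    (h : PairConsistent TA) : Consistent (red ep ce gC φ preds TA) := by
  classical
  obtain ⟨I, ⟨hfb, hmod⟩, hsat⟩ := h
  set F : ℕ → I.Δ → Option D.Dom := fun f d =>
    if f < (base ep ce TA) then I.feat f d else if f - (base ep ce TA) < TA.2.length then some (cN TA (f - (base ep ce TA))) else none
    with hFdef
  have hfresh : ∀ j, j < TA.2.length → ∀ d, F ((base ep ce TA) + j) d = some (cN TA j) := by
    intro j hj d
    rw [hFdef]
    simp only
    rw [if_neg (by omega), Nat.add_sub_cancel_left, if_pos hj]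
  have hold : ∀ f, f < (base ep ce TA) → ∀ d, F f d = I.feat f d := by
    intro f hf d
    rw [hFdef]
    simp only
    rw [if_pos hf]
  set I' : Interp D := {I with feat := F} with hI'
  have htop : ∀ d : I'.Δ, d ∈ csem I' topC := by
    intro d; rw [csem_topC]; trivial
  refine ⟨I', hfb, ?_⟩
  intro ci hci
  rw [red, List.mem_append] at hci
  rcases hci with hci | hci
  · -- original TBox axioms
    have hb := mfC_lt_base ep ce TA hci
    have hH : ∀ (d : I.Δ) (P : D.Pred) (t : Fin (D.arity P) → D.Dom),
        D.interp P t ↔ D.interp P (⇑(Equiv.refl D.Dom) ∘ t) := by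
      intro d P t; rw [show ⇑(Equiv.refl D.Dom) ∘ t = t from rfl]
    have hF' : ∀ f d, f < (base ep ce TA) → F f d = Option.map (⇑(Equiv.refl D.Dom)) (I.feat f d) := by
      intro f d hf
      rw [hold f hf d]
      simp
    rw [show csem I' = csem ({I with feat := F}) from rfl]
    rw [csem_update I (fun _ => Equiv.refl D.Dom) F (base ep ce TA) hH (fun _ _ _ _ => rfl) hF' ci.1
        (le_of_lt hb.1),
      csem_update I (fun _ => Equiv.refl D.Dom) F (base ep ce TA) hH (fun _ _ _ _ => rfl) hF' ci.2
        (le_of_lt hb.2)]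
    exact hmod ci hci
  · rw [extraAx] at hci
    simp only [List.append_assoc, List.mem_append] at hci
    rcases hci with hci | hci | hci | hci
    · -- definedness axioms
      simp only [List.mem_map, List.mem_range] at hci
      obtain ⟨j, hj, rfl⟩ := hci
      intro d _
      rw [mem_csem_defC I' hJEPD preds hpreds P₁ hP₁]
      exact ⟨cN TA j, hfresh j hj d⟩
    · -- propagation axioms
      simp only [List.mem_map, List.mem_range] at hci
      obtain ⟨j, hj, rfl⟩ := hci
      intro d _
      simp only [csem, Set.mem_setOf_eq, qsat]
      intro e he
      have he' : e ∈ I'.succs d := he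
      rw [mem_ssem_sQFF I' φ _ d e he' (cN TA j) (cN TA j) (hfresh j hj d) (hfresh j hj e)]
      exact (hφ _ _).mpr rfl
    · -- type axioms
      simp only [List.mem_flatMap, List.mem_map] at hci
      obtain ⟨P, hP, l, hl, rfl⟩ := hci
      obtain ⟨hlen, hmem⟩ := patterns_sound hl
      have hgetlt : ∀ i : Fin (D.arity P), l.getD i.val 0 < TA.2.length := by
        intro i
        have hi : i.val < l.length := by rw [hlen]; exact i.isLt
        rw [List.getD_eq_getElem _ _ hi]
        exact hmem _ (List.getElem_mem hi)
      have hcdr : ∀ d : I'.Δ, d ∈ csem I' (typeCon ep ce TA P l) ↔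
          D.interp P fun i => cN TA (l.getD i.val 0) := by
        intro d
        exact mem_csem_cdr_feat I' P _ d _
          (fun i => hfresh (l.getD i.val 0) (hgetlt i) d)
      cases hb : bitP ep ce gC TA P l
      · simp only [hb, Bool.false_eq_true, if_false]
        intro d _
        rw [csem_neg, Set.mem_compl_iff, hcdr d]
        intro hint
        have := (bitP_correct ep ce gC hgC TA P l hlen).mpr hint
        rw [hb] at this
        cases this
      · simp only [hb, if_true]
        intro d _
        rw [hcdr d]
        exact (bitP_correct ep ce gC hgC TA P l hlen).mp hb
    · -- linking axioms
      simp only [List.mem_map, List.mem_range] at hci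
      obtain ⟨i, hi, rfl⟩ := hci
      intro d hd
      have hd' : d = I.indiv (aN TA i) := hd
      subst hd'
      have hfa : TA.2.getD i dfltA ∈ TA.2 := by
        rw [List.getD_eq_getElem _ _ hi]
        exact List.getElem_mem hi
      have hsa := hsat _ hfa
      have hlt : fN TA i < (base ep ce TA) := fa_lt_base ep ce TA hfa
      have hfeat : F (fN TA i) (I.indiv (aN TA i)) = some (cN TA i) := by
        rw [hold _ hlt]
        exact hsa
      simp only [csem, Set.mem_inter_iff]
      refine ⟨?_, ?_, ?_⟩
      · rw [mem_csem_defC I' hJEPD preds hpreds P₁ hP₁]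
        exact ⟨cN TA i, hfeat⟩
      · rw [mem_csem_defC I' hJEPD preds hpreds P₁ hP₁]
        exact ⟨cN TA i, hfresh i hi _⟩
      · rw [mem_csem_cQFF I' φ (fN TA i) ((base ep ce TA) + i) _ (cN TA i) (cN TA i) hfeat (hfresh i hi _)]
        exact (hφ _ _).mpr rfl
theorem red_backward (ep : D.Pred → ℕ) (ce : D.Dom → ℕ) (gC : ℕ → Bool) (φ : QFF D Bool)
    (preds : List D.Pred)
    (hJEPD : JEPD D) (hhom : Homogeneous D)
    (hgC : ∀ S : List (Cstr D (ℕ ⊕ D.Dom)), (gC (encFCSC ep ce S) = true ↔ fcsSatC S))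
    (hφ : ∀ a b : D.Dom, φ.Eval (fun v => bif v then b else a) ↔ a = b)
    (hpreds : ∀ P : D.Pred, P ∈ preds)
    (P₁ : D.Pred) (hP₁ : 0 < D.arity P₁)
    (TA : TBox D × List (FAssertion D))
    (h : Consistent (red ep ce gC φ preds TA)) : PairConsistent TA := by
  classical
  obtain ⟨J, hfb, hmod⟩ := h
  have hmemT : ∀ ci ∈ TA.1, csem J ci.1 ⊆ csem J ci.2 := by
    intro ci h
    exact hmod ci (by rw [red]; exact List.mem_append_left _ h)
  have hax : ∀ ax ∈ extraAx ep ce gC φ preds TA, csem J ax.1 ⊆ csem J ax.2 := by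
    intro ax h
    exact hmod ax (by rw [red]; exact List.mem_append_right _ h)
  have htop : ∀ d : J.Δ, d ∈ csem J topC := by
    intro d; rw [csem_topC]; trivial
  -- the values of the fresh features
  have hdef : ∀ (j : Fin TA.2.length) (d : J.Δ),
      ∃ u, J.feat (base ep ce TA + (j : ℕ)) d = some u := by
    intro j d
    have hmem : ((topC : Concept D), defC preds (base ep ce TA + (j : ℕ)))
        ∈ extraAx ep ce gC φ preds TA := by
      rw [extraAx]
      simp only [List.append_assoc]
      apply List.mem_append_left
      simp only [List.mem_map, List.mem_range]
      exact ⟨j, j.isLt, rfl⟩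
    have h2 := hax _ hmem (htop d)
    rwa [mem_csem_defC J hJEPD preds hpreds P₁ hP₁] at h2
  choose v hv using hdef
  -- propagation of the fresh features along role edges
  have hprop : ∀ (j : Fin TA.2.length) (r : ℕ) (d e : J.Δ),
      J.role r d e → v j d = v j e := by
    intro j r d e hre
    have hmem : ((topC : Concept D),
        Concept.succr (.subset .univ (sQFF φ (base ep ce TA + (j : ℕ)))))
        ∈ extraAx ep ce gC φ preds TA := by
      rw [extraAx]
      simp only [List.append_assoc]
      apply List.mem_append_right
      apply List.mem_append_left
      simp only [List.mem_map, List.mem_range]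
      exact ⟨j, j.isLt, rfl⟩
    have h2 := hax _ hmem (htop d)
    simp only [csem, Set.mem_setOf_eq, qsat] at h2
    have he : e ∈ J.succs d := ⟨r, hre⟩
    have h3 := h2 (show e ∈ ssem J d .univ from he)
    rw [mem_ssem_sQFF J φ _ d e he _ _ (hv j d) (hv j e)] at h3
    exact (hφ _ _).mp h3
  -- the fresh features realize the type of the asserted constants, everywhere
  have htype : ∀ (d : J.Δ) (P : D.Pred) (jj : Fin (D.arity P) → Fin TA.2.length),
      ((D.interp P fun i => v (jj i) d) ↔ D.interp P fun i => cN TA (jj i)) := by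
    intro d P jj
    have hlmem := patterns_complete jj
    have hlen : (List.ofFn fun i => ((jj i : ℕ))).length = D.arity P := by simp
    have hgetD : ∀ i : Fin (D.arity P),
        (List.ofFn fun i => ((jj i : ℕ))).getD i.val 0 = (jj i : ℕ) := by
      intro i
      rw [List.getD_eq_getElem _ _ (by simp [i.isLt]), List.getElem_ofFn]
    have hmem : ((topC : Concept D),
        if bitP ep ce gC TA P (List.ofFn fun i => ((jj i : ℕ)))
        then typeCon ep ce TA P (List.ofFn fun i => ((jj i : ℕ)))
        else .neg (typeCon ep ce TA P (List.ofFn fun i => ((jj i : ℕ)))))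
        ∈ extraAx ep ce gC φ preds TA := by
      rw [extraAx]
      simp only [List.append_assoc]
      apply List.mem_append_right
      apply List.mem_append_right
      apply List.mem_append_left
      simp only [List.mem_flatMap, List.mem_map]
      exact ⟨P, hpreds P, _, hlmem, rfl⟩
    have h2 := hax _ hmem (htop d)
    have hcdr : d ∈ csem J (typeCon ep ce TA P (List.ofFn fun i => ((jj i : ℕ)))) ↔
        D.interp P fun i => v (jj i) d := by
      rw [typeCon]
      exact mem_csem_cdr_feat J P _ d _
        (fun i => by rw [hgetD i]; exact hv (jj i) d)
    have hbitiff := bitP_correct ep ce gC hgC TA P _ hlen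
    have hcn : (fun i => cN TA ((List.ofFn fun i => ((jj i : ℕ))).getD i.val 0)) =
        fun i => cN TA (jj i) := funext fun i => by rw [hgetD i]
    rw [hcn] at hbitiff
    cases hb : bitP ep ce gC TA P (List.ofFn fun i => ((jj i : ℕ)))
    · rw [hb] at h2 hbitiff
      simp only [Bool.false_eq_true, if_false] at h2
      rw [csem_neg, Set.mem_compl_iff, hcdr] at h2
      constructor
      · intro h'; exact absurd h' h2
      · intro h'
        exact absurd (hbitiff.mpr h') (by simp)
    · rw [hb] at h2 hbitiff
      simp only [if_true] at h2
      rw [hcdr] at h2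
      exact iff_of_true h2 (hbitiff.mp rfl)
  -- transfer of the defining formula between fresh values and constants
  have transfer : ∀ (d : J.Δ) (j k : Fin TA.2.length),
      ((φ.Eval fun b => bif b then v k d else v j d) ↔
        φ.Eval fun b => bif b then cN TA k else cN TA j) := by
    intro d j k
    apply QFF.Eval_congr
    intro P args
    have := htype d P (fun i => bif args i then k else j)
    convert this using 2 <;> funext i <;> cases hai : args i <;> simp [hai]
  have hcc : ∀ (d : J.Δ) (j k : Fin TA.2.length), v j d = v k d → cN TA j = cN TA k :=
    fun d j k h => (hφ _ _).mp ((transfer d j k).mp ((hφ _ _).mpr h))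
  have hvv : ∀ (d : J.Δ) (j k : Fin TA.2.length), cN TA j = cN TA k → v j d = v k d :=
    fun d j k h => (hφ _ _).mp ((transfer d j k).mpr ((hφ _ _).mpr h))
  -- connected components of the role graph
  set rel : J.Δ → J.Δ → Prop := fun d e => ∃ r, J.role r d e with hrel
  letI st : Setoid J.Δ := Relation.EqvGen.setoid rel
  have hconst : ∀ (j : Fin TA.2.length) (d e : J.Δ),
      Relation.EqvGen rel d e → v j d = v j e := by
    intro j d e h
    induction h with
    | rel x y h' => exact hprop j h'.choose x y h'.choose_spec
    | refl x => rfl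
    | symm x y _ ih => exact ih.symm
    | trans x y z _ _ ih1 ih2 => exact ih1.trans ih2
  set q : J.Δ → J.Δ := fun d => (Quotient.mk st d).out with hqdef
  have hq : ∀ d, Relation.EqvGen rel (q d) d := fun d => Quotient.mk_out d
  have hqedge : ∀ (r : ℕ) (d e : J.Δ), J.role r d e → q d = q e := fun r d e h =>
    congrArg Quotient.out (Quotient.sound (Relation.EqvGen.rel d e ⟨r, h⟩))
  -- one automorphism per component, sending fresh values to the constants
  have hauto : ∀ x : J.Δ, ∃ h : D.Dom ≃ D.Dom,
      (∀ (P : D.Pred) (t : Fin (D.arity P) → D.Dom),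
        D.interp P t ↔ D.interp P (⇑h ∘ t)) ∧
      ∀ y ∈ Set.range (fun j : Fin TA.2.length => v j x),
        h y = if hy : ∃ j : Fin TA.2.length, v j x = y then cN TA hy.choose else y := by
    intro x
    have hinj : Set.InjOn
        (fun y => if hy : ∃ j : Fin TA.2.length, v j x = y then cN TA hy.choose else y)
        (Set.range (fun j : Fin TA.2.length => v j x)) := by
      rintro y₁ hy₁ y₂ hy₂ hgy
      obtain ⟨j₁, hj₁⟩ := hy₁
      obtain ⟨j₂, hj₂⟩ := hy₂
      have hj₁' : v j₁ x = y₁ := hj₁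
      have hj₂' : v j₂ x = y₂ := hj₂
      beta_reduce at hgy
      rw [dif_pos ⟨j₁, hj₁'⟩, dif_pos ⟨j₂, hj₂'⟩] at hgy
      have h1 := (⟨j₁, hj₁'⟩ : ∃ j : Fin TA.2.length, v j x = y₁).choose_spec
      have h2 := (⟨j₂, hj₂'⟩ : ∃ j : Fin TA.2.length, v j x = y₂).choose_spec
      rw [← h1, ← h2]
      exact hvv x _ _ hgy
    have hpres : ∀ (P : D.Pred) (t : Fin (D.arity P) → D.Dom),
        (∀ i, t i ∈ Set.range (fun j : Fin TA.2.length => v j x)) →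
        (D.interp P t ↔ D.interp P
          ((fun y => if hy : ∃ j : Fin TA.2.length, v j x = y then cN TA hy.choose else y)
            ∘ t)) := by
      intro P t ht
      have hsel : ∀ i, ∃ j : Fin TA.2.length, v j x = t i := fun i => ht i
      choose κ hκ using hsel
      have h1 : t = fun i => v (κ i) x := funext fun i => (hκ i).symm
      rw [h1, htype x P κ]
      have h2 : ((fun y => if hy : ∃ j : Fin TA.2.length, v j x = y
            then cN TA hy.choose else y) ∘ fun i => v (κ i) x) =
          fun i => cN TA (κ i) := by
        funext i
        simp only [Function.comp_apply]
        rw [dif_pos ⟨κ i, rfl⟩]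
        exact hcc x _ _ (⟨κ i, rfl⟩ : ∃ j : Fin TA.2.length,
          v j x = v (κ i) x).choose_spec
      rw [h2]
    exact hhom _ (Set.finite_range _) _ hinj hpres
  choose auto hauto1 hauto2 using hauto
  have hkey : ∀ (x : J.Δ) (j : Fin TA.2.length), auto x (v j x) = cN TA j := by
    intro x j
    rw [hauto2 x (v j x) ⟨j, rfl⟩, dif_pos ⟨j, rfl⟩]
    exact hcc x _ j (⟨j, rfl⟩ : ∃ k : Fin TA.2.length, v k x = v j x).choose_spec
  -- the corrected model
  set Hm : J.Δ → (D.Dom ≃ D.Dom) := fun d => auto (q d) with hHm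
  set F : ℕ → J.Δ → Option D.Dom := fun f d => Option.map (Hm d) (J.feat f d) with hFdef
  have hH : ∀ (d : J.Δ) (P : D.Pred) (t : Fin (D.arity P) → D.Dom),
      D.interp P t ↔ D.interp P (⇑(Hm d) ∘ t) := fun d => hauto1 (q d)
  have hedge : ∀ (r : ℕ) (d e : J.Δ), J.role r d e → Hm d = Hm e := by
    intro r d e h
    rw [hHm]
    simp only
    rw [hqedge r d e h]
  refine ⟨{J with feat := F}, ⟨hfb, ?_⟩, ?_⟩
  · intro ci hci
    rw [csem_update J Hm F (max (mfC ci.1) (mfC ci.2)) hH hedge (fun f d _ => rfl) ci.1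
          (le_max_left _ _),
        csem_update J Hm F (max (mfC ci.1) (mfC ci.2)) hH hedge (fun f d _ => rfl) ci.2
          (le_max_right _ _)]
    exact hmemT ci hci
  · intro fa hfa
    obtain ⟨i, hi, heq⟩ := List.mem_iff_getElem.mp hfa
    have hgetD : TA.2.getD i dfltA = fa := by rw [List.getD_eq_getElem _ _ hi, heq]
    have hmem4 : ((.nominal (aN TA i) : Concept D),
        .conj (defC preds (fN TA i))
          (.conj (defC preds (base ep ce TA + i)) (cQFF φ (fN TA i) (base ep ce TA + i))))
        ∈ extraAx ep ce gC φ preds TA := by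
      rw [extraAx]
      simp only [List.append_assoc]
      apply List.mem_append_right
      apply List.mem_append_right
      apply List.mem_append_right
      simp only [List.mem_map, List.mem_range]
      exact ⟨i, hi, rfl⟩
    have hd : J.indiv (aN TA i) ∈ csem J (.nominal (aN TA i)) := by
      rw [csem_nominal]; rfl
    have h2 := hax _ hmem4 hd
    rw [csem_conj, csem_conj, Set.mem_inter_iff, Set.mem_inter_iff] at h2
    obtain ⟨hdf, -, hcq⟩ := h2
    rw [mem_csem_defC J hJEPD preds hpreds P₁ hP₁] at hdf
    obtain ⟨w, hw⟩ := hdf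
    have hvi := hv ⟨i, hi⟩ (J.indiv (aN TA i))
    have hev := (mem_csem_cQFF J φ (fN TA i) (base ep ce TA + i) _ w (v ⟨i, hi⟩ _)
      hw hvi).mp hcq
    have hwv : w = v ⟨i, hi⟩ (J.indiv (aN TA i)) := (hφ _ _).mp hev
    show F fa.1 (J.indiv fa.2.1) = some fa.2.2
    have h1 : fN TA i = fa.1 := by rw [fN, hgetD]
    have h3 : aN TA i = fa.2.1 := by rw [aN, hgetD]
    have h4 : cN TA i = fa.2.2 := by rw [cN, hgetD]
    rw [← h1, ← h3, ← h4, hFdef]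
    simp only
    rw [hw, hwv, Option.map_some]
    congr 1
    rw [show v ⟨i, hi⟩ (J.indiv (aN TA i)) = v ⟨i, hi⟩ (q (J.indiv (aN TA i))) from
      (hconst _ _ _ (hq _)).symm]
    exact hkey (q (J.indiv (aN TA i))) ⟨i, hi⟩
/-! ### Computability helpers -/

theorem computable_list_map {α β σ : Type} [Primcodable α] [Primcodable β] [Primcodable σ]
    {f : α → List β} {g : α → β → σ} (hf : Computable f) (hg : Computable₂ g) :
    Computable fun a => (f a).map (g a) := by
  have hh : Computable₂ fun (a : α) (p : ℕ × List σ) =>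
      p.2 ++ (((f a)[p.1]?).map (g a)).toList :=
    Computable.list_append.comp (Computable.snd.comp Computable.snd)
      ((Primrec.optionToList.to_comp).comp
        (Computable.option_map
          (Computable.list_getElem?.comp (hf.comp Computable.fst)
            (Computable.fst.comp Computable.snd))
          (hg.comp (Computable.fst.comp Computable.fst) Computable.snd)))
  have h := Computable.nat_rec (f := fun a => (f a).length)
    (g := fun _ : α => ([] : List σ)) (h := fun a (p : ℕ × List σ) =>
      p.2 ++ (((f a)[p.1]?).map (g a)).toList)
    ((Primrec.list_length.to_comp).comp hf) (Computable.const []) hh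
  refine h.of_eq fun a => ?_
  have key : ∀ k : ℕ,
      (Nat.rec ([] : List σ) (fun y IH =>
        IH ++ (((f a)[y]?).map (g a)).toList) k : List σ) =
      ((f a).take k).map (g a) := by
    intro k
    induction k with
    | zero => simp
    | succ k ih =>
      rw [show (Nat.rec ([] : List σ) (fun y IH =>
          IH ++ (((f a)[y]?).map (g a)).toList) (k+1) : List σ) =
          (Nat.rec ([] : List σ) (fun y IH =>
          IH ++ (((f a)[y]?).map (g a)).toList) k : List σ) ++
          (((f a)[k]?).map (g a)).toList from rfl, ih, List.take_succ,
        List.map_append]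
      congr 1
      cases hk : (f a)[k]? <;> simp [hk]
  rw [key ((f a).length), List.take_length]

theorem computable_list_flatMap {α β σ : Type} [Primcodable α] [Primcodable β] [Primcodable σ]
    {f : α → List β} {g : α → β → List σ} (hf : Computable f) (hg : Computable₂ g) :
    Computable fun a => (f a).flatMap (g a) := by
  have := (Primrec.list_flatten.to_comp).comp (computable_list_map hf hg)
  refine this.of_eq fun a => ?_
  simp [List.flatMap]
theorem flatMap_congr {α β : Type*} {l : List α} {f g : α → List β}
    (h : ∀ a ∈ l, f a = g a) : l.flatMap f = l.flatMap g := by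
  induction l with
  | nil => rfl
  | cons a l ih =>
    simp only [List.flatMap_cons]
    rw [h a List.mem_cons_self, ih fun a ha => h a (List.mem_cons_of_mem _ ha)]
/-! ### Numeric mirrors of the constructed concepts -/

def ngN (x : ℕ) : ℕ := 7 * Nat.pair 2 x
def cjN (x y : ℕ) : ℕ := 7 * Nat.pair 3 (Nat.pair x y)
def orN (x y : ℕ) : ℕ := ngN (cjN (ngN x) (ngN y))
def botN : ℕ := cjN 0 (ngN 0)
def topN : ℕ := ngN botN

def bigOrN : List ℕ → ℕ
  | [] => botN
  | x :: l => orN x (bigOrN l)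

def cdrfN (p ar f : ℕ) : ℕ :=
  7 * Nat.pair 4 (Nat.pair p (encL (List.replicate ar (Nat.pair 0 f))))

def defN (pl : List (ℕ × ℕ)) (f : ℕ) : ℕ :=
  bigOrN ((pl.filter fun pa => 0 < pa.2).map fun pa => cdrfN pa.1 pa.2 f)

def tcN (p ar b : ℕ) (l : List ℕ) : ℕ :=
  7 * Nat.pair 4 (Nat.pair p (encL ((List.range ar).map fun i => Nat.pair 0 (b + l.getD i 0))))

def cqN (ep : D.Pred → ℕ) : QFF D Bool → ℕ → ℕ → ℕ
  | .atom P args, f, g => 7 * Nat.pair 4 (Nat.pair (ep P)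
      (encL (List.ofFn fun i => Nat.pair 0 (bif args i then g else f))))
  | .not ψ, f, g => ngN (cqN ep ψ f g)
  | .and ψ χ, f, g => cjN (cqN ep ψ f g) (cqN ep χ f g)
  | .or ψ χ, f, g => orN (cqN ep ψ f g) (cqN ep χ f g)

def sqN (ep : D.Pred → ℕ) : QFF D Bool → ℕ → ℕ
  | .atom P args, g => 8 * Nat.pair 2 (Nat.pair (ep P)
      (encL (List.ofFn fun i => bif args i then 2 * g + 1 else 2 * g)))
  | .not ψ, g => 8 * Nat.pair 7 (sqN ep ψ g)
  | .and ψ χ, g => 8 * Nat.pair 5 (Nat.pair (sqN ep ψ g) (sqN ep χ g))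
  | .or ψ χ, g => 8 * Nat.pair 6 (Nat.pair (sqN ep ψ g) (sqN ep χ g))

def propN (ep : D.Pred → ℕ) (φ : QFF D Bool) (g : ℕ) : ℕ :=
  7 * Nat.pair 5 (8 * Nat.pair 0 (Nat.pair (8 * Nat.pair 4 0) (sqN ep φ g)))

section CodeLemmas

variable (ep : D.Pred → ℕ)

theorem encC_botC : encC ep botC = botN := rfl

theorem encC_topC : encC ep topC = topN := rfl

theorem encC_orC (C₁ C₂ : Concept D) :
    encC ep (orC C₁ C₂) = orN (encC ep C₁) (encC ep C₂) := rfl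

theorem encC_bigOr (L : List (Concept D)) :
    encC ep (bigOr L) = bigOrN (L.map (encC ep)) := by
  induction L with
  | nil => rfl
  | cons C l ih => simp only [bigOr, List.map_cons, bigOrN, encC_orC, ih]

theorem encC_defC (preds : List D.Pred) (f : ℕ) :
    encC ep (defC preds f) = defN (preds.map fun P => (ep P, D.arity P)) f := by
  rw [defC, encC_bigOr, defN, List.filter_map, List.map_map, List.map_map]
  congr 1
  · apply List.map_congr_left
    intro P hP
    simp only [Function.comp_apply, encC, cdrfN]
    congr 2
    rw [show (List.ofFn fun _ : Fin (D.arity P) => encPath (.feat f)) =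
      List.replicate (D.arity P) (encPath (.feat f)) from List.ofFn_const _ _]
    rfl

theorem encC_cQFF (ψ : QFF D Bool) (f g : ℕ) :
    encC ep (cQFF ψ f g) = cqN ep ψ f g := by
  induction ψ with
  | atom P args => rfl
  | not ψ ih => simp only [cQFF, encC, cqN, ngN, ih]
  | and ψ χ ihψ ihχ => simp only [cQFF, encC, cqN, cjN, ihψ, ihχ]
  | or ψ χ ihψ ihχ => simp only [cQFF, encC_orC, cqN, ihψ, ihχ]

theorem encS_sQFF (ψ : QFF D Bool) (g : ℕ) :
    encS ep (sQFF ψ g) = sqN ep ψ g := by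
  induction ψ with
  | atom P args =>
    simp only [sQFF, encS, sqN]
    congr 2
    have : (fun i => encFPtr (bif args i then FPtr.next g else FPtr.here g)) =
        fun i : Fin (D.arity P) => bif args i then 2 * g + 1 else 2 * g := by
      funext i
      cases hai : args i <;> simp [hai, encFPtr]
    rw [this]
  | not ψ ih => simp only [sQFF, encS, sqN, ih]
  | and ψ χ ihψ ihχ => simp only [sQFF, encS, sqN, ihψ, ihχ]
  | or ψ χ ihψ ihχ => simp only [sQFF, encS, sqN, ihψ, ihχ]

theorem encC_prop (φ : QFF D Bool) (g : ℕ) :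
    encC ep (.succr (.subset .univ (sQFF φ g))) = propN ep φ g := by
  simp only [encC, encQ, encS, propN, encS_sQFF]

theorem encC_typeCon (ce : D.Dom → ℕ) (TA : TBox D × List (FAssertion D)) (P : D.Pred)
    (l : List ℕ) :
    encC ep (typeCon ep ce TA P l) = tcN (ep P) (D.arity P) (base ep ce TA) l := by
  rw [typeCon, encC, tcN]
  have : (List.ofFn fun i : Fin (D.arity P) =>
      encPath (Path.feat (base ep ce TA + l.getD (i : ℕ) 0))) =
      (List.range (D.arity P)).map fun i => Nat.pair 0 (base ep ce TA + l.getD i 0) := by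
    apply List.ext_getElem
    · simp
    · intro i h1 h2
      simp [encPath]
  rw [this]

end CodeLemmas

theorem encC_neg (ep : D.Pred → ℕ) (C : Concept D) : encC ep (.neg C) = ngN (encC ep C) := rfl
/-! ### The numeric reduction function -/

def extraAxN (ep : D.Pred → ℕ) (gC : ℕ → Bool) (φ : QFF D Bool) (pl : List (ℕ × ℕ))
    (x : ℕ) : List ℕ :=
  ((List.range (Denumerable.ofNat (List ℕ) x.unpair.2).length).map fun j =>
    Nat.pair topN (defN pl (x + 1 + j))) ++
  ((List.range (Denumerable.ofNat (List ℕ) x.unpair.2).length).map fun j =>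
    Nat.pair topN (propN ep φ (x + 1 + j))) ++
  (pl.flatMap fun pa =>
    (patterns pa.2 (Denumerable.ofNat (List ℕ) x.unpair.2).length).map fun l =>
      Nat.pair topN
        (if gC (encL [Nat.pair pa.1 (encL (l.map fun m =>
            2 * (((Denumerable.ofNat (List ℕ) x.unpair.2).map
              fun y => y.unpair.2.unpair.2).getD m 0) + 1))])
         then tcN pa.1 pa.2 (x + 1) l else ngN (tcN pa.1 pa.2 (x + 1) l))) ++
  ((List.range (Denumerable.ofNat (List ℕ) x.unpair.2).length).map fun i =>
    Nat.pair
      (7 * Nat.pair 1 (((Denumerable.ofNat (List ℕ) x.unpair.2).getD i 0).unpair.2.unpair.1))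
      (cjN (defN pl (((Denumerable.ofNat (List ℕ) x.unpair.2).getD i 0).unpair.1))
        (cjN (defN pl (x + 1 + i))
          (cqN ep φ (((Denumerable.ofNat (List ℕ) x.unpair.2).getD i 0).unpair.1)
            (x + 1 + i)))))

def redN (ep : D.Pred → ℕ) (gC : ℕ → Bool) (φ : QFF D Bool) (pl : List (ℕ × ℕ))
    (x : ℕ) : ℕ :=
  encL (Denumerable.ofNat (List ℕ) x.unpair.1 ++ extraAxN ep gC φ pl x)

theorem redN_eq (ep : D.Pred → ℕ) (ce : D.Dom → ℕ) (gC : ℕ → Bool) (φ : QFF D Bool)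
    (preds : List D.Pred) (TA : TBox D × List (FAssertion D)) :
    redN ep gC φ (preds.map fun P => (ep P, D.arity P)) (encPair ep ce TA) =
    encTBox ep (red ep ce gC φ preds TA) := by
  have hasl : Denumerable.ofNat (List ℕ) (encPair ep ce TA).unpair.2 =
      TA.2.map fun fa => Nat.pair fa.1 (Nat.pair fa.2.1 (ce fa.2.2)) := by
    rw [encPair, Nat.unpair_pair, encL_eq_encode, Denumerable.ofNat_encode]
  have hT : Denumerable.ofNat (List ℕ) (encPair ep ce TA).unpair.1 =
      TA.1.map fun ci => Nat.pair (encC ep ci.1) (encC ep ci.2) := by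
    rw [encPair, Nat.unpair_pair, encTBox, encL_eq_encode, Denumerable.ofNat_encode]
  have hlen : (TA.2.map fun fa => Nat.pair fa.1 (Nat.pair fa.2.1 (ce fa.2.2))).length =
      TA.2.length := by simp
  have hb : encPair ep ce TA + 1 = base ep ce TA := rfl
  have hccodes : ((TA.2.map fun fa => Nat.pair fa.1 (Nat.pair fa.2.1 (ce fa.2.2))).map
      fun y => y.unpair.2.unpair.2) = TA.2.map fun fa => ce fa.2.2 := by
    rw [List.map_map]
    apply List.map_congr_left
    intro fa _
    simp [Nat.unpair_pair]
  have hgetc : ∀ m < TA.2.length,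
      (TA.2.map fun fa => ce fa.2.2).getD m 0 = ce (cN TA m) := by
    intro m hm
    rw [List.getD_eq_getElem _ _ (by simpa using hm), List.getElem_map, cN,
      List.getD_eq_getElem _ _ hm]
  have hgetf : ∀ i < TA.2.length,
      ((TA.2.map fun fa => Nat.pair fa.1 (Nat.pair fa.2.1 (ce fa.2.2))).getD i 0).unpair.1 =
      fN TA i := by
    intro i hi
    rw [List.getD_eq_getElem _ _ (by simpa using hi), List.getElem_map, Nat.unpair_pair, fN,
      List.getD_eq_getElem _ _ hi]
  have hgeta : ∀ i < TA.2.length,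
      ((TA.2.map fun fa => Nat.pair fa.1 (Nat.pair fa.2.1 (ce fa.2.2))).getD i
        0).unpair.2.unpair.1 = aN TA i := by
    intro i hi
    rw [List.getD_eq_getElem _ _ (by simpa using hi), List.getElem_map, Nat.unpair_pair,
      Nat.unpair_pair, aN, List.getD_eq_getElem _ _ hi]
  rw [redN, extraAxN, hasl, hT, hlen, red, encTBox, List.map_append, encL_eq_encode, encL_eq_encode]
  congr 2
  rw [extraAx]
  simp only [List.map_append]
  congr 1
  congr 1
  congr 1
  · -- definedness axioms
    rw [List.map_map]
    apply List.map_congr_left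
    intro j hj
    simp only [Function.comp_apply]
    rw [← encC_topC ep, ← encC_defC ep, hb]
  · -- propagation axioms
    rw [List.map_map]
    apply List.map_congr_left
    intro j hj
    simp only [Function.comp_apply]
    rw [← encC_topC ep, ← encC_prop ep, hb]
  · -- type axioms
    rw [List.map_flatMap, List.flatMap_map]
    apply flatMap_congr
    intro P _
    simp only [Function.comp_apply]
    conv_rhs => rw [List.map_map]
    apply List.map_congr_left
    intro l hl
    have hmem := (patterns_sound hl).2
    simp only [Function.comp_apply]
    have hcond : (l.map fun m =>
        2 * (((TA.2.map fun fa => Nat.pair fa.1 (Nat.pair fa.2.1 (ce fa.2.2))).map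
          fun y => y.unpair.2.unpair.2).getD m 0) + 1) =
        l.map fun m => 2 * ce (cN TA m) + 1 := by
      rw [hccodes]
      apply List.map_congr_left
      intro m hm
      rw [hgetc m (hmem m hm)]
    rw [hcond, hb, apply_ite (encC ep), encC_typeCon, encC_neg, encC_typeCon,
      ← encC_topC ep, bitP]
  · -- linking axioms
    rw [List.map_map]
    apply List.map_congr_left
    intro i hi
    rw [List.mem_range] at hi
    simp only [Function.comp_apply]
    rw [hgetf i hi, hgeta i hi, hb, ← encC_cQFF ep, ← encC_defC ep, ← encC_defC ep]
    rfl
/-! ### Computability of the numeric reduction -/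

theorem bigOrN_eq_foldr (l : List ℕ) : bigOrN l = l.foldr orN botN := by
  induction l with
  | nil => rfl
  | cons x l ih => simp only [bigOrN, List.foldr_cons, ih]

theorem replicate_eq_range_map (n v : ℕ) :
    List.replicate n v = (List.range n).map fun _ => v := by
  simp [List.map_const']

section Comp

theorem primrec_ngN : Primrec ngN :=
  Primrec.nat_mul.comp (Primrec.const 7)
    (Primrec₂.natPair.comp (Primrec.const 2) Primrec.id)

theorem primrec_cjN : Primrec₂ cjN :=
  Primrec.to₂ <| Primrec.nat_mul.comp (Primrec.const 7)
    (Primrec₂.natPair.comp (Primrec.const 3)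
      (Primrec₂.natPair.comp Primrec.fst Primrec.snd))

theorem primrec_orN : Primrec₂ orN :=
  Primrec.to₂ <| primrec_ngN.comp <| primrec_cjN.comp
    (primrec_ngN.comp Primrec.fst) (primrec_ngN.comp Primrec.snd)

theorem primrec_bigOrN : Primrec bigOrN := by
  have h := Primrec.list_foldr (Primrec.id (α := List ℕ)) (Primrec.const botN)
    (Primrec.to₂ <| primrec_orN.comp (Primrec.fst.comp Primrec.snd)
      (Primrec.snd.comp Primrec.snd))
  exact h.of_eq fun l => (bigOrN_eq_foldr l).symm

theorem primrec_encL : Primrec encL :=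
  Primrec.encode.of_eq fun l => (encL_eq_encode l).symm

theorem primrec_replicate : Primrec₂ (List.replicate : ℕ → ℕ → List ℕ) := by
  have h := Primrec.list_map (Primrec.list_range.comp Primrec.fst)
    (Primrec.to₂ (α := ℕ × ℕ) (Primrec.snd.comp Primrec.fst))
  exact Primrec₂.mk <| h.of_eq fun p => (replicate_eq_range_map p.1 p.2).symm

theorem primrec_defN (pl : List (ℕ × ℕ)) : Primrec (defN pl) := by
  have hcdrf : Primrec₂ fun (f : ℕ) (pa : ℕ × ℕ) => cdrfN pa.1 pa.2 f :=
    Primrec.to₂ <| Primrec.nat_mul.comp (Primrec.const 7)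
      (Primrec₂.natPair.comp (Primrec.const 4)
        (Primrec₂.natPair.comp (Primrec.fst.comp Primrec.snd)
          (primrec_encL.comp
            (primrec_replicate.comp (Primrec.snd.comp Primrec.snd)
              (Primrec₂.natPair.comp (Primrec.const 0) Primrec.fst)))))
  exact primrec_bigOrN.comp
    (Primrec.list_map (Primrec.const (pl.filter fun pa => 0 < pa.2)) hcdrf)

variable (ep : D.Pred → ℕ)

theorem computable_sqN (φ : QFF D Bool) : Computable fun g : ℕ => sqN ep φ g := by
  have cmul : Computable₂ ((· * ·) : ℕ → ℕ → ℕ) := Primrec.nat_mul.to_comp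
  have cpair : Computable₂ Nat.pair := Primrec₂.natPair.to_comp
  have cencL : Computable encL := primrec_encL.to_comp
  induction φ with
  | atom P args =>
    simp only [sqN]
    refine cmul.comp (Computable.const 8) (cpair.comp (Computable.const 2)
      (cpair.comp (Computable.const (ep P)) (cencL.comp (Computable.list_ofFn fun i => ?_))))
    cases hai : args i <;> simp only [hai, cond_true, cond_false]
    · exact cmul.comp (Computable.const 2) Computable.id
    · exact Computable.succ.comp (cmul.comp (Computable.const 2) Computable.id)
  | not ψ ih =>
    simp only [sqN]
    exact cmul.comp (Computable.const 8) (cpair.comp (Computable.const 7) ih)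
  | and ψ χ ihψ ihχ =>
    simp only [sqN]
    exact cmul.comp (Computable.const 8)
      (cpair.comp (Computable.const 5) (cpair.comp ihψ ihχ))
  | or ψ χ ihψ ihχ =>
    simp only [sqN]
    exact cmul.comp (Computable.const 8)
      (cpair.comp (Computable.const 6) (cpair.comp ihψ ihχ))

theorem computable_cqN (φ : QFF D Bool) :
    Computable fun p : ℕ × ℕ => cqN ep φ p.1 p.2 := by
  have cmul : Computable₂ ((· * ·) : ℕ → ℕ → ℕ) := Primrec.nat_mul.to_comp
  have cpair : Computable₂ Nat.pair := Primrec₂.natPair.to_comp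
  have cencL : Computable encL := primrec_encL.to_comp
  induction φ with
  | atom P args =>
    simp only [cqN]
    refine cmul.comp (Computable.const 7) (cpair.comp (Computable.const 4)
      (cpair.comp (Computable.const (ep P)) (cencL.comp (Computable.list_ofFn fun i => ?_))))
    cases hai : args i <;> simp only [hai, cond_true, cond_false]
    · exact cpair.comp (Computable.const 0) Computable.fst
    · exact cpair.comp (Computable.const 0) Computable.snd
  | not ψ ih =>
    simp only [cqN]
    exact primrec_ngN.to_comp.comp ih
  | and ψ χ ihψ ihχ =>
    simp only [cqN]
    exact primrec_cjN.to_comp.comp ihψ ihχ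
  | or ψ χ ihψ ihχ =>
    simp only [cqN]
    exact primrec_orN.to_comp.comp ihψ ihχ

theorem computable_propN (φ : QFF D Bool) : Computable (propN ep φ) := by
  have cmul : Computable₂ ((· * ·) : ℕ → ℕ → ℕ) := Primrec.nat_mul.to_comp
  have cpair : Computable₂ Nat.pair := Primrec₂.natPair.to_comp
  exact cmul.comp (Computable.const 7) (cpair.comp (Computable.const 5)
    (cmul.comp (Computable.const 8) (cpair.comp (Computable.const 0)
      (cpair.comp (Computable.const (8 * Nat.pair 4 0)) (computable_sqN ep φ)))))

set_option maxHeartbeats 1000000 in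
theorem computable_patterns : Computable fun p : ℕ × ℕ => patterns p.1 p.2 := by
  have hh : Computable₂ fun (p : ℕ × ℕ) (q : ℕ × List (List ℕ)) =>
      (List.range p.2).flatMap fun m => q.2.map (m :: ·) := by
    apply Computable₂.mk
    apply computable_list_flatMap
      (Primrec.list_range.to_comp.comp (Computable.snd.comp Computable.fst))
    apply Computable₂.mk
    exact computable_list_map
      (Computable.snd.comp (Computable.snd.comp Computable.fst))
      (Computable.list_cons.comp (Computable.snd.comp Computable.fst) Computable.snd).to₂
  have h := Computable.nat_rec (f := fun p : ℕ × ℕ => p.1)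
    (g := fun _ : ℕ × ℕ => ([[]] : List (List ℕ)))
    (h := fun (p : ℕ × ℕ) (q : ℕ × List (List ℕ)) =>
      (List.range p.2).flatMap fun m => q.2.map (m :: ·))
    Computable.fst (Computable.const [[]]) hh
  refine h.of_eq fun p => ?_
  obtain ⟨k, n⟩ := p
  simp only
  induction k with
  | zero => rfl
  | succ k ih => rw [show patterns (k+1) n =
      (List.range n).flatMap (fun m => (patterns k n).map (m :: ·)) from rfl, ← ih]

set_option maxHeartbeats 2000000 in
theorem redN_computable {gC : ℕ → Bool} (hgC : Computable gC)
    (φ : QFF D Bool) (pl : List (ℕ × ℕ)) : Computable (redN ep gC φ pl) := by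
  have cmul : Computable₂ ((· * ·) : ℕ → ℕ → ℕ) := Primrec.nat_mul.to_comp
  have cadd : Computable₂ ((· + ·) : ℕ → ℕ → ℕ) := Primrec.nat_add.to_comp
  have cpair : Computable₂ Nat.pair := Primrec₂.natPair.to_comp
  have cencL : Computable encL := primrec_encL.to_comp
  have cgetD : Computable₂ (fun (l : List ℕ) (m : ℕ) => l.getD m 0) :=
    (Primrec.list_getD 0).to_comp
  have cu1 : Computable fun x : ℕ => x.unpair.1 :=
    (Primrec.fst.comp Primrec.unpair).to_comp
  have cu2 : Computable fun x : ℕ => x.unpair.2 :=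
    (Primrec.snd.comp Primrec.unpair).to_comp
  have casl : Computable fun x : ℕ => Denumerable.ofNat (List ℕ) x.unpair.2 :=
    (Computable.ofNat (List ℕ)).comp cu2
  have cn : Computable fun x : ℕ => (Denumerable.ofNat (List ℕ) x.unpair.2).length :=
    Primrec.list_length.to_comp.comp casl
  have crange : Computable fun x : ℕ =>
      List.range (Denumerable.ofNat (List ℕ) x.unpair.2).length :=
    Primrec.list_range.to_comp.comp cn
  -- E1
  have cE1 : Computable fun x : ℕ =>
      (List.range (Denumerable.ofNat (List ℕ) x.unpair.2).length).map fun j =>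
        Nat.pair topN (defN pl (x + 1 + j)) := by
    apply computable_list_map crange
    apply Computable₂.mk
    exact cpair.comp (Computable.const topN)
      ((primrec_defN pl).to_comp.comp
        (cadd.comp (Computable.succ.comp Computable.fst) Computable.snd))
  -- E2
  have cE2 : Computable fun x : ℕ =>
      (List.range (Denumerable.ofNat (List ℕ) x.unpair.2).length).map fun j =>
        Nat.pair topN (propN ep φ (x + 1 + j)) := by
    apply computable_list_map crange
    apply Computable₂.mk
    exact cpair.comp (Computable.const topN)
      ((computable_propN ep φ).comp
        (cadd.comp (Computable.succ.comp Computable.fst) Computable.snd))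
  -- ccodes
  have cccodes : Computable fun x : ℕ =>
      (Denumerable.ofNat (List ℕ) x.unpair.2).map fun y => y.unpair.2.unpair.2 := by
    apply computable_list_map casl
    apply Computable₂.mk
    exact cu2.comp (cu2.comp Computable.snd)
  -- E3
  have cE3 : Computable fun x : ℕ =>
      pl.flatMap fun pa =>
        (patterns pa.2 (Denumerable.ofNat (List ℕ) x.unpair.2).length).map fun l =>
          Nat.pair topN
            (if gC (encL [Nat.pair pa.1 (encL (l.map fun m =>
                2 * (((Denumerable.ofNat (List ℕ) x.unpair.2).map
                  fun y => y.unpair.2.unpair.2).getD m 0) + 1))])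
             then tcN pa.1 pa.2 (x + 1) l else ngN (tcN pa.1 pa.2 (x + 1) l)) := by
    apply computable_list_flatMap (Computable.const pl)
    apply Computable₂.mk
    -- a : ℕ × (ℕ × ℕ)  (x, pa)
    apply computable_list_map
      (computable_patterns.comp
        ((Computable.snd.comp Computable.snd).pair (cn.comp Computable.fst)))
    apply Computable₂.mk
    -- r : (ℕ × (ℕ × ℕ)) × List ℕ
    have cx : Computable fun r : (ℕ × (ℕ × ℕ)) × List ℕ => r.1.1 :=
      Computable.fst.comp Computable.fst
    have cpa1 : Computable fun r : (ℕ × (ℕ × ℕ)) × List ℕ => r.1.2.1 :=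
      Computable.fst.comp (Computable.snd.comp Computable.fst)
    have cpa2 : Computable fun r : (ℕ × (ℕ × ℕ)) × List ℕ => r.1.2.2 :=
      Computable.snd.comp (Computable.snd.comp Computable.fst)
    have cl : Computable fun r : (ℕ × (ℕ × ℕ)) × List ℕ => r.2 := Computable.snd
    have cinner : Computable fun r : (ℕ × (ℕ × ℕ)) × List ℕ =>
        r.2.map fun m => 2 * (((Denumerable.ofNat (List ℕ) r.1.1.unpair.2).map
          fun y => y.unpair.2.unpair.2).getD m 0) + 1 := by
      apply computable_list_map cl
      apply Computable₂.mk
      exact Computable.succ.comp (cmul.comp (Computable.const 2)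
        (cgetD.comp (cccodes.comp (cx.comp Computable.fst)) Computable.snd))
    have ccode : Computable fun r : (ℕ × (ℕ × ℕ)) × List ℕ =>
        encL [Nat.pair r.1.2.1 (encL (r.2.map fun m =>
          2 * (((Denumerable.ofNat (List ℕ) r.1.1.unpair.2).map
            fun y => y.unpair.2.unpair.2).getD m 0) + 1))] :=
      cencL.comp (Computable.list_cons.comp
        (cpair.comp cpa1 (cencL.comp cinner)) (Computable.const []))
    have ctc : Computable fun r : (ℕ × (ℕ × ℕ)) × List ℕ =>
        tcN r.1.2.1 r.1.2.2 (r.1.1 + 1) r.2 := by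
      have hl : Computable fun r : (ℕ × (ℕ × ℕ)) × List ℕ =>
          (List.range r.1.2.2).map fun i => Nat.pair 0 (r.1.1 + 1 + r.2.getD i 0) := by
        apply computable_list_map (Primrec.list_range.to_comp.comp cpa2)
        apply Computable₂.mk
        exact cpair.comp (Computable.const 0)
          (cadd.comp (Computable.succ.comp (cx.comp Computable.fst))
            (cgetD.comp (cl.comp Computable.fst) Computable.snd))
      exact cmul.comp (Computable.const 7) (cpair.comp (Computable.const 4)
        (cpair.comp cpa1 (cencL.comp hl)))
    have hcond := Computable.cond (hgC.comp ccode) ctc (primrec_ngN.to_comp.comp ctc)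
    refine (cpair.comp (Computable.const topN) (hcond.of_eq fun r => ?_)).of_eq fun r => rfl
    rw [Bool.cond_eq_ite]
  -- E4
  have cE4 : Computable fun x : ℕ =>
      (List.range (Denumerable.ofNat (List ℕ) x.unpair.2).length).map fun i =>
        Nat.pair
          (7 * Nat.pair 1
            (((Denumerable.ofNat (List ℕ) x.unpair.2).getD i 0).unpair.2.unpair.1))
          (cjN (defN pl (((Denumerable.ofNat (List ℕ) x.unpair.2).getD i 0).unpair.1))
            (cjN (defN pl (x + 1 + i))
              (cqN ep φ (((Denumerable.ofNat (List ℕ) x.unpair.2).getD i 0).unpair.1)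
                (x + 1 + i)))) := by
    apply computable_list_map crange
    apply Computable₂.mk
    have cget : Computable fun p : ℕ × ℕ =>
        (Denumerable.ofNat (List ℕ) p.1.unpair.2).getD p.2 0 :=
      cgetD.comp (casl.comp Computable.fst) Computable.snd
    have cfi : Computable fun p : ℕ × ℕ =>
        ((Denumerable.ofNat (List ℕ) p.1.unpair.2).getD p.2 0).unpair.1 := cu1.comp cget
    have cbi : Computable fun p : ℕ × ℕ => p.1 + 1 + p.2 :=
      cadd.comp (Computable.succ.comp Computable.fst) Computable.snd
    exact cpair.comp
      (cmul.comp (Computable.const 7) (cpair.comp (Computable.const 1)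
        (cu1.comp (cu2.comp cget))))
      (primrec_cjN.to_comp.comp ((primrec_defN pl).to_comp.comp cfi)
        (primrec_cjN.to_comp.comp ((primrec_defN pl).to_comp.comp cbi)
          ((computable_cqN ep φ).comp (cfi.pair cbi))))
  -- assemble
  have cextra : Computable (extraAxN ep gC φ pl) := by
    have h := Computable.list_append.comp
      (Computable.list_append.comp (Computable.list_append.comp cE1 cE2) cE3) cE4
    exact h.of_eq fun x => rfl
  have cT : Computable fun x : ℕ => Denumerable.ofNat (List ℕ) x.unpair.1 :=
    (Computable.ofNat (List ℕ)).comp cu1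
  exact cencL.comp (Computable.list_append.comp cT cextra)

end Comp
/-! ### The degenerate case: all predicates are nullary -/

mutual
theorem mfC_deg (h0 : ∀ P : D.Pred, D.arity P = 0) : ∀ C : Concept D, mfC C = 0
  | .atom _ => rfl
  | .nominal _ => rfl
  | .neg C => mfC_deg h0 C
  | .conj C₁ C₂ => by rw [mfC, mfC_deg h0 C₁, mfC_deg h0 C₂]; rfl
  | .cdr P paths => le_antisymm
      (Finset.sup_le fun i _ => absurd i.isLt (by simp [h0 P])) (Nat.zero_le _)
  | .succr con => mfQ_deg h0 con

theorem mfS_deg (h0 : ∀ P : D.Pred, D.arity P = 0) : ∀ s : SetTerm D, mfS s = 0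
  | .role _ => rfl
  | .concept C => mfC_deg h0 C
  | .frole P args => le_antisymm
      (Finset.sup_le fun i _ => absurd i.isLt (by simp [h0 P])) (Nat.zero_le _)
  | .empty => rfl
  | .univ => rfl
  | .inter s t => by rw [mfS, mfS_deg h0 s, mfS_deg h0 t]; rfl
  | .union s t => by rw [mfS, mfS_deg h0 s, mfS_deg h0 t]; rfl
  | .compl s => mfS_deg h0 s

theorem mfL_deg (h0 : ∀ P : D.Pred, D.arity P = 0) : ∀ l : LinExpr D, mfL l = 0
  | .const _ => rfl
  | .add l₁ l₂ => by rw [mfL, mfL_deg h0 l₁, mfL_deg h0 l₂]; rfl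
  | .card _ s => mfS_deg h0 s

theorem mfQ_deg (h0 : ∀ P : D.Pred, D.arity P = 0) : ∀ c : QCon D, mfQ c = 0
  | .subset s t => by rw [mfQ, mfS_deg h0 s, mfS_deg h0 t]; rfl
  | .seteq s t => by rw [mfQ, mfS_deg h0 s, mfS_deg h0 t]; rfl
  | .numeq l₁ l₂ => by rw [mfQ, mfL_deg h0 l₁, mfL_deg h0 l₂]; rfl
  | .numlt l₁ l₂ => by rw [mfQ, mfL_deg h0 l₁, mfL_deg h0 l₂]; rfl
  | .dvd _ l => mfL_deg h0 l
  | .not c => mfQ_deg h0 c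
  | .and c₁ c₂ => by rw [mfQ, mfQ_deg h0 c₁, mfQ_deg h0 c₂]; rfl
  | .or c₁ c₂ => by rw [mfQ, mfQ_deg h0 c₁, mfQ_deg h0 c₂]; rfl
end

theorem deg_equiv (h0 : ∀ P : D.Pred, D.arity P = 0) (φ : QFF D Bool)
    (hφ : ∀ a b : D.Dom, φ.Eval (fun v => bif v then b else a) ↔ a = b)
    (TA : TBox D × List (FAssertion D)) :
    PairConsistent TA ↔ Consistent TA.1 := by
  classical
  constructor
  · rintro ⟨I, hm, -⟩; exact ⟨I, hm⟩
  · rintro ⟨I, hfb, hmod⟩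
    have hsub : ∀ a b : D.Dom, a = b := by
      intro a b
      have hcong : (φ.Eval fun v => bif v then b else a) ↔
          (φ.Eval fun v => bif v then a else a) := by
        apply QFF.Eval_congr
        intro P args
        have heq : ((fun v => bif v then b else a) ∘ args) =
            ((fun v => bif v then a else a) ∘ args) := by
          funext i
          exact absurd i.isLt (by simp [h0 P])
        rw [heq]
      rw [← hφ a b, hcong, hφ a a]
    set F : ℕ → I.Δ → Option D.Dom :=
      fun _ _ => some (Classical.choice D.dom_nonempty) with hFdef
    refine ⟨{I with feat := F}, ⟨hfb, ?_⟩, ?_⟩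
    · intro ci hci
      have hH : ∀ (d : I.Δ) (P : D.Pred) (t : Fin (D.arity P) → D.Dom),
          D.interp P t ↔ D.interp P (⇑(Equiv.refl D.Dom) ∘ t) := by
        intro d P t; rw [show ⇑(Equiv.refl D.Dom) ∘ t = t from rfl]
      rw [csem_update I (fun _ => Equiv.refl D.Dom) F 0 hH (fun _ _ _ _ => rfl)
          (fun f d hf => absurd hf (Nat.not_lt_zero f)) ci.1
          (le_of_eq (mfC_deg h0 ci.1)),
        csem_update I (fun _ => Equiv.refl D.Dom) F 0 hH (fun _ _ _ _ => rfl)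
          (fun f d hf => absurd hf (Nat.not_lt_zero f)) ci.2
          (le_of_eq (mfC_deg h0 ci.2))]
      exact hmod ci hci
    · intro fa hfa
      show F fa.1 (I.indiv fa.2.1) = some fa.2.2
      rw [hFdef]
      exact congrArg some (hsub _ _)

/-- For an ω-admissible and homogeneous concrete domain `D` with
constants, consistency of an ALCOSCC(D) TBox together with feature assertions can be
computably reduced to consistency of plain ALCOSCC(D) TBoxes: a computable map sends (the
code of) each pair `(T, A)` to (the code of) a TBox `T'` that is consistent iff `(T, A)`
is. -/
theorem feature_assertions_removable
    (D : ConcreteDomain) (hfin : Finite D.Pred)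
    (ep : D.Pred → ℕ) (hep : Function.Injective ep)
    (hJEPD : JEPD D) (hJD : JD D) (hAP : AP D) (hcompact : HomOmegaCompact D)
    (hCSP : CSPDecidable D ep)
    (hhom : Homogeneous D)
    (ce : D.Dom → ℕ) (hce : Function.Injective ce)
    (hCSPC : CSPCDecidable D ep ce) :
    ∃ g : ℕ → ℕ, Computable g ∧
      ∀ TA : TBox D × List (FAssertion D),
        ∃ T' : TBox D, g (encPair ep ce TA) = encTBox ep T' ∧
          (PairConsistent TA ↔ Consistent T') := by
  classical
  obtain ⟨φ, hφ⟩ := hJD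
  obtain ⟨gCC, hgCcomp, hgCspec⟩ := hCSPC
  by_cases hdeg : ∀ P : D.Pred, D.arity P = 0
  · refine ⟨fun x => x.unpair.1, (Primrec.fst.comp Primrec.unpair).to_comp, ?_⟩
    intro TA
    refine ⟨TA.1, ?_, deg_equiv hdeg φ hφ TA⟩
    show (Nat.unpair (Nat.pair _ _)).1 = _
    rw [Nat.unpair_pair]
  · push_neg at hdeg
    obtain ⟨P₁, hP₁⟩ := hdeg
    have hP₁' : 0 < D.arity P₁ := Nat.pos_of_ne_zero hP₁
    letI := Fintype.ofFinite D.Pred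
    refine ⟨redN ep gCC φ (((Finset.univ : Finset D.Pred).toList).map
      fun P => (ep P, D.arity P)), redN_computable ep hgCcomp φ _, ?_⟩
    intro TA
    have hpreds : ∀ P : D.Pred, P ∈ (Finset.univ : Finset D.Pred).toList := by
      intro P
      rw [Finset.mem_toList]
      exact Finset.mem_univ P
    refine ⟨red ep ce gCC φ (Finset.univ : Finset D.Pred).toList TA,
      redN_eq ep ce gCC φ _ TA, ?_⟩
    constructor
    · exact red_forward ep ce gCC φ _ hJEPD hgCspec hφ hpreds P₁ hP₁' TA
    · exact red_backward ep ce gCC φ _ hJEPD hhom hgCspec hφ hpreds P₁ hP₁' TA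

end ALCOSCC
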